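/- arXiv:1905.05048 — 12 statements merged into one kernel-verified Lean document; each statement's English description precedes it below -/
import Mathlib

section
/- Let M = (α, β; γ, δ) ∈ SL₂(ℤ) satisfy α ≡ δ (mod p) and γ ≡ εβ (mod p), let [A,B,C] ∈ Q_ns, and write [A',B',C'] = [A,B,C]·M. Then A' ≡ A (mod p), B' ≡ B (mod 2p) and C' ≡ C (mod p); in particular [A',B',C'] ∈ Q_ns. -/
/-! Reduced modulo `p`, the conditions say `α = δ`, `γ = εβ`, `B = 0` and `A = -Cε`, so
`det M = α² - εβ² = 1` and direct substitution gives `A' = A`, `C' = C` and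
`Aαβ + Bβγ + Cγδ = 0`. Over `ℤ`, `det M = 1` gives `B' = B + 2(Aαβ + Bβγ + Cγδ)`, whence
`B' ≡ B (mod 2p)`. -/

section FormAction

variable {R : Type*} [CommRing R] {ε α β γ δ A B C : R}

theorem form_act_A_eq (hαδ : α = δ) (hγ : γ = ε * β) (hB : B = 0) (hAC : A + C * ε = 0)
    (hdet : α * δ - β * γ = 1) : A * α ^ 2 + B * α * γ + C * γ ^ 2 = A := by
  subst hαδ hγ hB
  linear_combination (α ^ 2 - 1) * hAC - C * ε * hdet

theorem form_act_C_eq (hαδ : α = δ) (hγ : γ = ε * β) (hB : B = 0) (hAC : A + C * ε = 0)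
    (hdet : α * δ - β * γ = 1) : A * β ^ 2 + B * β * δ + C * δ ^ 2 = C := by
  subst hαδ hγ hB
  linear_combination C * hdet + β ^ 2 * hAC

theorem form_act_half_B_diff_eq_zero (hαδ : α = δ) (hγ : γ = ε * β) (hB : B = 0)
    (hAC : A + C * ε = 0) : A * α * β + B * β * γ + C * γ * δ = 0 := by
  subst hαδ hγ hB
  linear_combination α * β * hAC

theorem form_act_B_eq (hdet : α * δ - β * γ = 1) :
    2 * A * α * β + B * (α * δ + β * γ) + 2 * C * γ * δ
      = B + 2 * (A * α * β + B * β * γ + C * γ * δ) := by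
  linear_combination B * hdet

end FormAction

theorem stmt_0_general (p : ℕ)
    (ε : ℤ)
    (α β γ δ : ℤ) (hdet : α * δ - β * γ = 1)
    (hαδ : α ≡ δ [ZMOD (p : ℤ)]) (hγβ : γ ≡ ε * β [ZMOD (p : ℤ)])
    (A B C : ℤ)
    (hB : B ≡ 0 [ZMOD (p : ℤ)]) (hAC : A + C * ε ≡ 0 [ZMOD (p : ℤ)])
    (A' B' C' : ℤ)
    (hA' : A' = A * α ^ 2 + B * α * γ + C * γ ^ 2)
    (hB' : B' = 2 * A * α * β + B * (α * δ + β * γ) + 2 * C * γ * δ)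
    (hC' : C' = A * β ^ 2 + B * β * δ + C * δ ^ 2) :
    A' ≡ A [ZMOD (p : ℤ)] ∧ B' ≡ B [ZMOD (2 * (p : ℤ))] ∧ C' ≡ C [ZMOD (p : ℤ)] ∧
      B' ≡ 0 [ZMOD (p : ℤ)] ∧ A' + C' * ε ≡ 0 [ZMOD (p : ℤ)] := by
  simp only [← ZMod.intCast_eq_intCast_iff, Int.cast_add, Int.cast_mul, Int.cast_zero]
    at hαδ hγβ hB hAC ⊢
  have hdet_mod : (α : ZMod p) * δ - β * γ = 1 := by
    exact_mod_cast congrArg (Int.cast : ℤ → ZMod p) hdet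
  have hA'_eq : (A' : ZMod p) = A := by
    rw [hA']; push_cast; exact form_act_A_eq hαδ hγβ hB hAC hdet_mod
  have hC'_eq : (C' : ZMod p) = C := by
    rw [hC']; push_cast; exact form_act_C_eq hαδ hγβ hB hAC hdet_mod
  have hhalf_diff : A * α * β + B * β * γ + C * γ * δ ≡ 0 [ZMOD (p : ℤ)] := by
    rw [← ZMod.intCast_eq_intCast_iff]; push_cast
    exact form_act_half_B_diff_eq_zero hαδ hγβ hB hAC
  have hB'_mod : B' ≡ B [ZMOD (2 * (p : ℤ))] := by
    rw [hB', form_act_B_eq hdet]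
    simpa using (hhalf_diff.mul_left' (c := 2)).add_left B
  refine ⟨hA'_eq, hB'_mod, hC'_eq, ?_, ?_⟩
  · rw [(ZMod.intCast_eq_intCast_iff _ _ _).mpr (hB'_mod.of_mul_left 2), hB]
  · rw [hA'_eq, hC'_eq, hAC]

/-- Lemma 5.1 (1)-(3) of the paper. If `M = (α, β; γ, δ) ∈ SL₂(ℤ)`
lies in `Γ_ns` (i.e. `α ≡ δ` and `γ ≡ εβ (mod p)`) and `[A,B,C] ∈ Q_ns`, then the
transformed form `[A',B',C'] = [A,B,C]·M` satisfies `A' ≡ A (mod p)`,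
`B' ≡ B (mod 2p)`, `C' ≡ C (mod p)`; in particular `[A',B',C'] ∈ Q_ns`. -/
theorem stmt_0 (p : ℕ) (hp : p.Prime) (hp2 : p ≠ 2)
    (ε : ℤ) (hε1 : ε ≡ 1 [ZMOD 4]) (hεns : ¬ IsSquare (ε : ZMod p))
    (α β γ δ : ℤ) (hdet : α * δ - β * γ = 1)
    (hαδ : α ≡ δ [ZMOD (p : ℤ)]) (hγβ : γ ≡ ε * β [ZMOD (p : ℤ)])
    (A B C : ℤ)
    (hB : B ≡ 0 [ZMOD (p : ℤ)]) (hAC : A + C * ε ≡ 0 [ZMOD (p : ℤ)])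
    (A' B' C' : ℤ)
    (hA' : A' = A * α ^ 2 + B * α * γ + C * γ ^ 2)
    (hB' : B' = 2 * A * α * β + B * (α * δ + β * γ) + 2 * C * γ * δ)
    (hC' : C' = A * β ^ 2 + B * β * δ + C * δ ^ 2) :
    A' ≡ A [ZMOD (p : ℤ)] ∧ B' ≡ B [ZMOD (2 * (p : ℤ))] ∧ C' ≡ C [ZMOD (p : ℤ)] ∧
      B' ≡ 0 [ZMOD (p : ℤ)] ∧ A' + C' * ε ≡ 0 [ZMOD (p : ℤ)] :=
  stmt_0_general p ε α β γ δ hdet hαδ hγβ A B C hB hAC A' B' C' hA' hB' hC'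
end

section
/- Let M = (α, β; γ, δ) ∈ SL₂(ℤ) satisfy α ≡ δ (mod p) and γ ≡ εβ (mod p), let [A,B,C] ∈ Q_ns, and write [A',B',C'] = [A,B,C]·M. Then A − A' ≡ ε(C − C') (mod p²). -/
/-! Modulo `det M - 1`, the difference `(A - A') - ε (C - C')` is a combination of the products
`(A + Cε)(δ - α)`, `(A + Cε)(εβ - γ)`, `B (δ - α)`, `B (εβ - γ)`, `(δ - α)²` and `(εβ - γ)²`,
each a product of two multiples of `p`. -/

theorem sub_sub_mul_sub_eq_of_det_eq_one {ε α β γ δ : ℤ} (hdet : α * δ - β * γ = 1)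
    (A B C : ℤ) :
    (A - (A * α ^ 2 + B * α * γ + C * γ ^ 2)) - ε * (C - (A * β ^ 2 + B * β * δ + C * δ ^ 2)) =
      (A + C * ε) * (α * (δ - α) + β * (ε * β - γ)) +
        B * (ε * β * (δ - α) + α * (ε * β - γ)) +
        C * (ε * (δ - α) ^ 2 - (ε * β - γ) ^ 2) := by
  linear_combination (ε * C - A) * hdet

theorem stmt_1_general (p : ℕ)
    (ε : ℤ)
    (α β γ δ : ℤ) (hdet : α * δ - β * γ = 1)
    (hαδ : α ≡ δ [ZMOD (p : ℤ)]) (hγβ : γ ≡ ε * β [ZMOD (p : ℤ)])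
    (A B C : ℤ)
    (hB : B ≡ 0 [ZMOD (p : ℤ)]) (hAC : A + C * ε ≡ 0 [ZMOD (p : ℤ)])
    (A' C' : ℤ)
    (hA' : A' = A * α ^ 2 + B * α * γ + C * γ ^ 2)
    (hC' : C' = A * β ^ 2 + B * β * δ + C * δ ^ 2) :
    A - A' ≡ ε * (C - C') [ZMOD ((p : ℤ) ^ 2)] := by
  have hmul {x y : ℤ} (hx : (p : ℤ) ∣ x) (hy : (p : ℤ) ∣ y) : (p : ℤ) ^ 2 ∣ x * y :=
    sq (p : ℤ) ▸ mul_dvd_mul hx hy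
  have hd : (p : ℤ) ∣ δ - α := hαδ.dvd
  have he : (p : ℤ) ∣ ε * β - γ := hγβ.dvd
  have hB0 : (p : ℤ) ∣ B := Int.modEq_zero_iff_dvd.mp hB
  have hAC0 : (p : ℤ) ∣ A + C * ε := Int.modEq_zero_iff_dvd.mp hAC
  rw [Int.modEq_comm, Int.modEq_iff_dvd, hA', hC', sub_sub_mul_sub_eq_of_det_eq_one hdet]
  refine dvd_add (dvd_add ?_ ?_) (dvd_mul_of_dvd_right ?_ C)
  · exact hmul hAC0 (dvd_add (dvd_mul_of_dvd_right hd α) (dvd_mul_of_dvd_right he β))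
  · exact hmul hB0 (dvd_add (dvd_mul_of_dvd_right hd _) (dvd_mul_of_dvd_right he α))
  · exact dvd_sub (dvd_mul_of_dvd_right (pow_dvd_pow_of_dvd hd 2) ε) (pow_dvd_pow_of_dvd he 2)

/-- Lemma 5.1 (4) of the paper. If `M = (α, β; γ, δ) ∈ SL₂(ℤ)` lies
in `Γ_ns` and `[A,B,C] ∈ Q_ns`, then `[A',B',C'] = [A,B,C]·M` satisfies
`A − A' ≡ ε(C − C') (mod p²)`. -/
theorem stmt_1 (p : ℕ) (hp : p.Prime) (hp2 : p ≠ 2)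
    (ε : ℤ) (hε1 : ε ≡ 1 [ZMOD 4]) (hεns : ¬ IsSquare (ε : ZMod p))
    (α β γ δ : ℤ) (hdet : α * δ - β * γ = 1)
    (hαδ : α ≡ δ [ZMOD (p : ℤ)]) (hγβ : γ ≡ ε * β [ZMOD (p : ℤ)])
    (A B C : ℤ)
    (hB : B ≡ 0 [ZMOD (p : ℤ)]) (hAC : A + C * ε ≡ 0 [ZMOD (p : ℤ)])
    (A' B' C' : ℤ)
    (hA' : A' = A * α ^ 2 + B * α * γ + C * γ ^ 2)
    (hB' : B' = 2 * A * α * β + B * (α * δ + β * γ) + 2 * C * γ * δ)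
    (hC' : C' = A * β ^ 2 + B * β * δ + C * δ ^ 2) :
    A - A' ≡ ε * (C - C') [ZMOD ((p : ℤ) ^ 2)] :=
  stmt_1_general p ε α β γ δ hdet hαδ hγβ A B C hB hAC A' C' hA' hC'
end

section
/- Let M = (α, β; γ, δ) ∈ SL₂(ℤ) satisfy α ≡ −δ (mod p) and γ ≡ −εβ (mod p), let [A,B,C] ∈ Q_ns, and write [A',B',C'] = [A,B,C]·M. Then A' ≡ −A (mod p), B' ≡ −B (mod 2p) and C' ≡ −C (mod p); in particular [A',B',C'] ∈ Q_ns. -/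
/-!
Reduce modulo `p`. There `δ = -α` and `γ = -εβ`, so the determinant condition reads
`α² - εβ² = -1`, and `A = -εC`, `B = 0`; substituting, `A' = -εC(α² - εβ²) = -A` and
`C' = C(α² - εβ²) = -C`. For the middle coefficient, `det M = 1` gives over `ℤ` the identity
`B' + B = 2(Aαβ + Bαδ + Cγδ)`, and the bracket vanishes modulo `p`.
-/

section CommRing

variable {R : Type*} [CommRing R] {ε α β γ δ A B C : R}

theorem act_coeff_a_eq_neg (hdet : α * δ - β * γ = 1) (hα : α = -δ) (hγ : γ = -(ε * β))
    (hB : B = 0) (hAC : A + C * ε = 0) :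
    A * α ^ 2 + B * α * γ + C * γ ^ 2 = -A := by
  subst hα hγ hB
  linear_combination (ε * β ^ 2) * hAC - A * hdet

theorem act_coeff_c_eq_neg (hdet : α * δ - β * γ = 1) (hα : α = -δ) (hγ : γ = -(ε * β))
    (hB : B = 0) (hAC : A + C * ε = 0) :
    A * β ^ 2 + B * β * δ + C * δ ^ 2 = -C := by
  subst hα hγ hB
  linear_combination β ^ 2 * hAC - C * hdet

theorem act_coeff_b_add_eq_two_mul (hdet : α * δ - β * γ = 1) :
    2 * A * α * β + B * (α * δ + β * γ) + 2 * C * γ * δ + B =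
      2 * (A * α * β + B * α * δ + C * γ * δ) := by
  linear_combination -B * hdet

theorem act_coeff_b_half_sum_eq_zero (hα : α = -δ) (hγ : γ = -(ε * β)) (hB : B = 0)
    (hAC : A + C * ε = 0) :
    A * α * β + B * α * δ + C * γ * δ = 0 := by
  subst hα hγ hB
  linear_combination (-(δ * β)) * hAC

end CommRing

theorem Int.modEq_neg_of_add_eq_two_mul {n x y s : ℤ} (hxy : x + y = 2 * s)
    (hs : s ≡ 0 [ZMOD n]) : x ≡ -y [ZMOD 2 * n] := by
  rw [Int.modEq_iff_dvd, show -y - x = -(2 * s) by linarith, dvd_neg]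
  exact mul_dvd_mul_left 2 (Int.modEq_zero_iff_dvd.1 hs)

theorem stmt_2_general (p : ℕ)
    (ε : ℤ)
    (α β γ δ : ℤ) (hdet : α * δ - β * γ = 1)
    (hαδ : α ≡ -δ [ZMOD (p : ℤ)]) (hγβ : γ ≡ -(ε * β) [ZMOD (p : ℤ)])
    (A B C : ℤ)
    (hB : B ≡ 0 [ZMOD (p : ℤ)]) (hAC : A + C * ε ≡ 0 [ZMOD (p : ℤ)])
    (A' B' C' : ℤ)
    (hA' : A' = A * α ^ 2 + B * α * γ + C * γ ^ 2)
    (hB' : B' = 2 * A * α * β + B * (α * δ + β * γ) + 2 * C * γ * δ)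
    (hC' : C' = A * β ^ 2 + B * β * δ + C * δ ^ 2) :
    A' ≡ -A [ZMOD (p : ℤ)] ∧ B' ≡ -B [ZMOD (2 * (p : ℤ))] ∧ C' ≡ -C [ZMOD (p : ℤ)] ∧
      B' ≡ 0 [ZMOD (p : ℤ)] ∧ A' + C' * ε ≡ 0 [ZMOD (p : ℤ)] := by
  have hdet' := congrArg (Int.cast : ℤ → ZMod p) hdet
  have hαδ' := (ZMod.intCast_eq_intCast_iff _ _ p).2 hαδ
  have hγβ' := (ZMod.intCast_eq_intCast_iff _ _ p).2 hγβ
  have hB0 := (ZMod.intCast_eq_intCast_iff _ _ p).2 hB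
  have hAC' := (ZMod.intCast_eq_intCast_iff _ _ p).2 hAC
  push_cast at hdet' hαδ' hγβ' hB0 hAC'
  have hA'p : A' ≡ -A [ZMOD p] := by
    rw [← ZMod.intCast_eq_intCast_iff, hA']
    push_cast
    exact act_coeff_a_eq_neg hdet' hαδ' hγβ' hB0 hAC'
  have hC'p : C' ≡ -C [ZMOD p] := by
    rw [← ZMod.intCast_eq_intCast_iff, hC']
    push_cast
    exact act_coeff_c_eq_neg hdet' hαδ' hγβ' hB0 hAC'
  have hB'2p : B' ≡ -B [ZMOD 2 * p] := by
    refine Int.modEq_neg_of_add_eq_two_mul (hB' ▸ act_coeff_b_add_eq_two_mul hdet) ?_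
    rw [← ZMod.intCast_eq_intCast_iff]
    push_cast
    exact act_coeff_b_half_sum_eq_zero hαδ' hγβ' hB0 hAC'
  refine ⟨hA'p, hB'2p, hC'p, (hB'2p.of_mul_left 2).trans (by simpa using hB.neg), ?_⟩
  calc A' + C' * ε ≡ -A + -C * ε [ZMOD p] := hA'p.add (hC'p.mul_right ε)
    _ = -(A + C * ε) := by ring
    _ ≡ 0 [ZMOD p] := by simpa using hAC.neg

/-- Lemma 5.4 (1)-(3) of the paper. If `M = (α, β; γ, δ) ∈ SL₂(ℤ)`
lies in `Γ⁺_ns \ Γ_ns` (i.e. `α ≡ −δ` and `γ ≡ −εβ (mod p)`) and `[A,B,C] ∈ Q_ns`,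
then `[A',B',C'] = [A,B,C]·M` satisfies `A' ≡ −A (mod p)`, `B' ≡ −B (mod 2p)`,
`C' ≡ −C (mod p)`; in particular `[A',B',C'] ∈ Q_ns`. -/
theorem stmt_2 (p : ℕ) (hp : p.Prime) (hp2 : p ≠ 2)
    (ε : ℤ) (hε1 : ε ≡ 1 [ZMOD 4]) (hεns : ¬ IsSquare (ε : ZMod p))
    (α β γ δ : ℤ) (hdet : α * δ - β * γ = 1)
    (hαδ : α ≡ -δ [ZMOD (p : ℤ)]) (hγβ : γ ≡ -(ε * β) [ZMOD (p : ℤ)])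
    (A B C : ℤ)
    (hB : B ≡ 0 [ZMOD (p : ℤ)]) (hAC : A + C * ε ≡ 0 [ZMOD (p : ℤ)])
    (A' B' C' : ℤ)
    (hA' : A' = A * α ^ 2 + B * α * γ + C * γ ^ 2)
    (hB' : B' = 2 * A * α * β + B * (α * δ + β * γ) + 2 * C * γ * δ)
    (hC' : C' = A * β ^ 2 + B * β * δ + C * δ ^ 2) :
    A' ≡ -A [ZMOD (p : ℤ)] ∧ B' ≡ -B [ZMOD (2 * (p : ℤ))] ∧ C' ≡ -C [ZMOD (p : ℤ)] ∧
      B' ≡ 0 [ZMOD (p : ℤ)] ∧ A' + C' * ε ≡ 0 [ZMOD (p : ℤ)] :=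
  stmt_2_general p ε α β γ δ hdet hαδ hγβ A B C hB hAC A' B' C' hA' hB' hC'
end

section
/- Let D and s be integers, let M = (α, β; γ, δ) ∈ SL₂(ℤ) satisfy α ≡ δ (mod p) and γ ≡ εβ (mod p), and let [A,B,C] ∈ Q_{ns,D,s}. Then [A,B,C]·M ∈ Q_{ns,D,s}. In other words, the group of such matrices acts on the set Q_{ns,D,s}. -/
/-!
Write `x = δ - α` and `y = γ - εβ`, which are divisible by `p` for the matrices in question,
and `d = αδ - βγ`. Expanding the transformed coefficients in `x`, `y`, `d` gives exact identities
such as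
`A' - C'ε = d (A - Cε) + (A + Cε)(βy - αx) + B(αy - εβx) + C(y² - εx²)`,
in which every term except the first is a product of two multiples of `p`. In the same way
`B'` and `A' + C'ε` are combinations of the multiples `B`, `A + Cε`, `x`, `y` of `p`,
`B' - dB` is even, and the discriminant gets multiplied by `d²`.
-/

section TransformedForm

variable {R : Type*} [CommRing R] {n A B C ε α β γ δ : R}

theorem discr_transform (A B C α β γ δ : R) :
    (2 * A * α * β + B * (α * δ + β * γ) + 2 * C * γ * δ) ^ 2 -
        4 * (A * α ^ 2 + B * α * γ + C * γ ^ 2) * (A * β ^ 2 + B * β * δ + C * δ ^ 2) =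
      (α * δ - β * γ) ^ 2 * (B ^ 2 - 4 * A * C) := by
  ring

theorem transform_middle_sub_det_mul (A B C α β γ δ : R) :
    2 * A * α * β + B * (α * δ + β * γ) + 2 * C * γ * δ - (α * δ - β * γ) * B =
      2 * (A * α * β + B * β * γ + C * γ * δ) := by
  ring

theorem dvd_transform_middle (hB : n ∣ B) (hAC : n ∣ A + C * ε) (hαδ : n ∣ δ - α)
    (hγβ : n ∣ γ - ε * β) :
    n ∣ 2 * A * α * β + B * (α * δ + β * γ) + 2 * C * γ * δ := by
  have key : 2 * A * α * β + B * (α * δ + β * γ) + 2 * C * γ * δ =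
      2 * α * β * (A + C * ε) + (α * δ + β * γ) * B +
        2 * C * (γ * (δ - α) + α * (γ - ε * β)) := by
    ring
  rw [key]
  exact dvd_add (dvd_add (hAC.mul_left _) (hB.mul_left _))
    ((dvd_add (hαδ.mul_left _) (hγβ.mul_left _)).mul_left _)

theorem dvd_transform_first_add_last_mul (hB : n ∣ B) (hAC : n ∣ A + C * ε)
    (hαδ : n ∣ δ - α) (hγβ : n ∣ γ - ε * β) :
    n ∣ A * α ^ 2 + B * α * γ + C * γ ^ 2 + (A * β ^ 2 + B * β * δ + C * δ ^ 2) * ε := by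
  have key : A * α ^ 2 + B * α * γ + C * γ ^ 2 + (A * β ^ 2 + B * β * δ + C * δ ^ 2) * ε =
      (α ^ 2 + ε * β ^ 2) * (A + C * ε) + (α * γ + ε * β * δ) * B +
        C * ((γ + ε * β) * (γ - ε * β) + ε * (δ + α) * (δ - α)) := by
    ring
  rw [key]
  exact dvd_add (dvd_add (hAC.mul_left _) (hB.mul_left _))
    ((dvd_add (hγβ.mul_left _) (hαδ.mul_left _)).mul_left _)

theorem transform_first_sub_last_mul_sub_det_mul (A B C ε α β γ δ : R) :
    A * α ^ 2 + B * α * γ + C * γ ^ 2 - (A * β ^ 2 + B * β * δ + C * δ ^ 2) * ε -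
        (α * δ - β * γ) * (A - C * ε) =
      (A + C * ε) * (β * (γ - ε * β) - α * (δ - α)) +
        B * (α * (γ - ε * β) - ε * β * (δ - α)) + C * ((γ - ε * β) ^ 2 - ε * (δ - α) ^ 2) := by
  ring

theorem sq_dvd_transform_first_sub_last_mul_sub (hB : n ∣ B) (hAC : n ∣ A + C * ε)
    (hαδ : n ∣ δ - α) (hγβ : n ∣ γ - ε * β) :
    n ^ 2 ∣ A * α ^ 2 + B * α * γ + C * γ ^ 2 - (A * β ^ 2 + B * β * δ + C * δ ^ 2) * ε -
      (α * δ - β * γ) * (A - C * ε) := by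
  have sq_dvd_mul {a b : R} (ha : n ∣ a) (hb : n ∣ b) : n ^ 2 ∣ a * b :=
    sq n ▸ mul_dvd_mul ha hb
  rw [transform_first_sub_last_mul_sub_det_mul]
  refine dvd_add (dvd_add (sq_dvd_mul hAC ?_) (sq_dvd_mul hB ?_)) (dvd_mul_of_dvd_right ?_ C)
  · exact dvd_sub (hγβ.mul_left β) (hαδ.mul_left α)
  · exact dvd_sub (hγβ.mul_left α) (hαδ.mul_left _)
  · exact dvd_sub (pow_dvd_pow_of_dvd hγβ 2) ((pow_dvd_pow_of_dvd hαδ 2).mul_left ε)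

end TransformedForm

theorem stmt_4_general (p : ℕ)
    (ε : ℤ)
    (D s : ℤ)
    (α β γ δ : ℤ) (hdet : α * δ - β * γ = 1)
    (hαδ : α ≡ δ [ZMOD (p : ℤ)]) (hγβ : γ ≡ ε * β [ZMOD (p : ℤ)])
    (A B C : ℤ)
    (hB : B ≡ 0 [ZMOD (p : ℤ)]) (hAC : A + C * ε ≡ 0 [ZMOD (p : ℤ)])
    (hdisc : B ^ 2 - 4 * A * C = D)
    (hs : A - C * ε ≡ s [ZMOD ((p : ℤ) ^ 2)]) (hs2 : B ≡ s [ZMOD 2])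
    (A' B' C' : ℤ)
    (hA' : A' = A * α ^ 2 + B * α * γ + C * γ ^ 2)
    (hB' : B' = 2 * A * α * β + B * (α * δ + β * γ) + 2 * C * γ * δ)
    (hC' : C' = A * β ^ 2 + B * β * δ + C * δ ^ 2) :
    B' ≡ 0 [ZMOD (p : ℤ)] ∧ A' + C' * ε ≡ 0 [ZMOD (p : ℤ)] ∧
      B' ^ 2 - 4 * A' * C' = D ∧
      A' - C' * ε ≡ s [ZMOD ((p : ℤ) ^ 2)] ∧ B' ≡ s [ZMOD 2] := by
  subst hA' hB' hC'
  rw [Int.modEq_zero_iff_dvd] at hB hAC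
  have hδα := hαδ.dvd
  have hγεβ := hγβ.symm.dvd
  refine ⟨Int.modEq_zero_iff_dvd.mpr (dvd_transform_middle hB hAC hδα hγεβ),
    Int.modEq_zero_iff_dvd.mpr (dvd_transform_first_add_last_mul hB hAC hδα hγεβ),
    by rw [discr_transform, hdet, one_pow, one_mul, hdisc], ?_, ?_⟩
  · refine (Int.modEq_iff_dvd.mpr ?_).symm.trans hs
    simpa only [hdet, one_mul] using sq_dvd_transform_first_sub_last_mul_sub hB hAC hδα hγεβ
  · refine (Int.modEq_iff_dvd.mpr ?_).symm.trans hs2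
    have h := transform_middle_sub_det_mul A B C α β γ δ
    rw [hdet, one_mul] at h
    exact h ▸ dvd_mul_right 2 _

/-- The group `Γ_ns` acts on `Q_{ns,D,s}`. If `M = (α, β; γ, δ) ∈ SL₂(ℤ)`
satisfies `α ≡ δ` and `γ ≡ εβ (mod p)`, and `[A,B,C] ∈ Q_{ns,D,s}`, then
`[A,B,C]·M ∈ Q_{ns,D,s}`. -/
theorem stmt_4 (p : ℕ) (hp : p.Prime) (hp2 : p ≠ 2)
    (ε : ℤ) (hε1 : ε ≡ 1 [ZMOD 4]) (hεns : ¬ IsSquare (ε : ZMod p))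
    (D s : ℤ)
    (α β γ δ : ℤ) (hdet : α * δ - β * γ = 1)
    (hαδ : α ≡ δ [ZMOD (p : ℤ)]) (hγβ : γ ≡ ε * β [ZMOD (p : ℤ)])
    (A B C : ℤ)
    (hB : B ≡ 0 [ZMOD (p : ℤ)]) (hAC : A + C * ε ≡ 0 [ZMOD (p : ℤ)])
    (hdisc : B ^ 2 - 4 * A * C = D)
    (hs : A - C * ε ≡ s [ZMOD ((p : ℤ) ^ 2)]) (hs2 : B ≡ s [ZMOD 2])
    (A' B' C' : ℤ)
    (hA' : A' = A * α ^ 2 + B * α * γ + C * γ ^ 2)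
    (hB' : B' = 2 * A * α * β + B * (α * δ + β * γ) + 2 * C * γ * δ)
    (hC' : C' = A * β ^ 2 + B * β * δ + C * δ ^ 2) :
    B' ≡ 0 [ZMOD (p : ℤ)] ∧ A' + C' * ε ≡ 0 [ZMOD (p : ℤ)] ∧
      B' ^ 2 - 4 * A' * C' = D ∧
      A' - C' * ε ≡ s [ZMOD ((p : ℤ) ^ 2)] ∧ B' ≡ s [ZMOD 2] :=
  stmt_4_general p ε D s α β γ δ hdet hαδ hγβ A B C hB hAC hdisc hs hs2 A' B' C' hA' hB' hC'
end

section
/- Let D and s be integers, let M = (α, β; γ, δ) ∈ SL₂(ℤ) satisfy α ≡ −δ (mod p) and γ ≡ −εβ (mod p), and let [A,B,C] ∈ Q_{ns,D,s}. Then [A,B,C]·M ∈ Q_{ns,D,−s}. -/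
/-!
Write `I` for the ideal `(p)`. The hypotheses say that `A + εC`, `B`, `α + δ` and `γ + εβ` all lie
in `I`. Expanding `B'`, `A' + εC'` and `A' - εC' + (A - εC)(αδ - βγ)` as combinations of these four
quantities, the first two are visibly in `I`, and every term of the third is a product of two of
them, so it lies in `I² = (p²)`. The discriminant is multiplied by `(det M)² = 1`, and
`B' ≡ B · det M (mod 2)`.
-/

section FormAction

variable {R : Type*} [CommRing R] {n A B C ε α β γ δ : R}

theorem dvd_act_middleCoeff (hAC : n ∣ A + C * ε) (hB : n ∣ B) (hαδ : n ∣ α + δ)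
    (hγβ : n ∣ γ + ε * β) :
    n ∣ 2 * A * α * β + B * (α * δ + β * γ) + 2 * C * γ * δ := by
  have key : 2 * A * α * β + B * (α * δ + β * γ) + 2 * C * γ * δ =
      2 * α * β * (A + C * ε) + (α * δ + β * γ) * B +
        2 * C * (δ * (γ + ε * β) - ε * β * (α + δ)) := by ring
  rw [key]
  exact dvd_add (dvd_add (hAC.mul_left _) (hB.mul_left _))
    ((dvd_sub (hγβ.mul_left δ) (hαδ.mul_left (ε * β))).mul_left _)

theorem dvd_act_firstCoeff_add_lastCoeff_mul (hAC : n ∣ A + C * ε) (hB : n ∣ B) (hαδ : n ∣ α + δ)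
    (hγβ : n ∣ γ + ε * β) :
    n ∣ (A * α ^ 2 + B * α * γ + C * γ ^ 2) + (A * β ^ 2 + B * β * δ + C * δ ^ 2) * ε := by
  have key : (A * α ^ 2 + B * α * γ + C * γ ^ 2) + (A * β ^ 2 + B * β * δ + C * δ ^ 2) * ε =
      (α ^ 2 + ε * β ^ 2) * (A + C * ε) + (α * γ + ε * β * δ) * B +
        C * ((γ - ε * β) * (γ + ε * β) + ε * (δ - α) * (α + δ)) := by ring
  rw [key]
  exact dvd_add (dvd_add (hAC.mul_left _) (hB.mul_left _))
    ((dvd_add (hγβ.mul_left _) (hαδ.mul_left _)).mul_left _)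

theorem sq_dvd_act_firstCoeff_sub_lastCoeff_mul_add (hAC : n ∣ A + C * ε) (hB : n ∣ B)
    (hαδ : n ∣ α + δ) (hγβ : n ∣ γ + ε * β) :
    n ^ 2 ∣ (A * α ^ 2 + B * α * γ + C * γ ^ 2) - (A * β ^ 2 + B * β * δ + C * δ ^ 2) * ε +
      (A - C * ε) * (α * δ - β * γ) := by
  have key : (A * α ^ 2 + B * α * γ + C * γ ^ 2) - (A * β ^ 2 + B * β * δ + C * δ ^ 2) * ε +
      (A - C * ε) * (α * δ - β * γ) =
      (A + C * ε) * (α * (α + δ) - β * (γ + ε * β)) + B * (α * (γ + ε * β) - ε * β * (α + δ)) +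
        C * ((γ + ε * β) * (γ + ε * β) - ε * ((α + δ) * (α + δ))) := by ring
  have hI : n ∣ α * (α + δ) - β * (γ + ε * β) := dvd_sub (hαδ.mul_left _) (hγβ.mul_left _)
  have hJ : n ∣ α * (γ + ε * β) - ε * β * (α + δ) := dvd_sub (hγβ.mul_left _) (hαδ.mul_left _)
  rw [key, sq]
  exact dvd_add (dvd_add (mul_dvd_mul hAC hI) (mul_dvd_mul hB hJ))
    ((dvd_sub (mul_dvd_mul hγβ hγβ) ((mul_dvd_mul hαδ hαδ).mul_left ε)).mul_left C)

end FormAction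

theorem stmt_5_general (p : ℕ)
    (ε : ℤ)
    (D s : ℤ)
    (α β γ δ : ℤ) (hdet : α * δ - β * γ = 1)
    (hαδ : α ≡ -δ [ZMOD (p : ℤ)]) (hγβ : γ ≡ -(ε * β) [ZMOD (p : ℤ)])
    (A B C : ℤ)
    (hB : B ≡ 0 [ZMOD (p : ℤ)]) (hAC : A + C * ε ≡ 0 [ZMOD (p : ℤ)])
    (hdisc : B ^ 2 - 4 * A * C = D)
    (hs : A - C * ε ≡ s [ZMOD ((p : ℤ) ^ 2)]) (hs2 : B ≡ s [ZMOD 2])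
    (A' B' C' : ℤ)
    (hA' : A' = A * α ^ 2 + B * α * γ + C * γ ^ 2)
    (hB' : B' = 2 * A * α * β + B * (α * δ + β * γ) + 2 * C * γ * δ)
    (hC' : C' = A * β ^ 2 + B * β * δ + C * δ ^ 2) :
    B' ≡ 0 [ZMOD (p : ℤ)] ∧ A' + C' * ε ≡ 0 [ZMOD (p : ℤ)] ∧
      B' ^ 2 - 4 * A' * C' = D ∧
      A' - C' * ε ≡ -s [ZMOD ((p : ℤ) ^ 2)] ∧ B' ≡ -s [ZMOD 2] := by
  subst hA' hB' hC'
  have hαδ' : (p : ℤ) ∣ α + δ := Int.modEq_zero_iff_dvd.mp (by simpa using hαδ.add_right δ)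
  have hγβ' : (p : ℤ) ∣ γ + ε * β :=
    Int.modEq_zero_iff_dvd.mp (by simpa using hγβ.add_right (ε * β))
  have hB' := Int.modEq_zero_iff_dvd.mp hB
  have hAC' := Int.modEq_zero_iff_dvd.mp hAC
  have hsq := sq_dvd_act_firstCoeff_sub_lastCoeff_mul_add hAC' hB' hαδ' hγβ'
  rw [hdet, mul_one] at hsq
  have hnorm : A * α ^ 2 + B * α * γ + C * γ ^ 2 - (A * β ^ 2 + B * β * δ + C * δ ^ 2) * ε ≡
      -(A - C * ε) [ZMOD (p : ℤ) ^ 2] :=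
    Int.modEq_iff_dvd.mpr (by rw [← dvd_neg]; convert hsq using 1; ring)
  have hparity : 2 * A * α * β + B * (α * δ + β * γ) + 2 * C * γ * δ ≡ B [ZMOD 2] :=
    Int.modEq_iff_dvd.mpr ⟨-(A * α * β + B * β * γ + C * γ * δ), by linear_combination -B * hdet⟩
  refine ⟨Int.modEq_zero_iff_dvd.mpr (dvd_act_middleCoeff hAC' hB' hαδ' hγβ'),
    Int.modEq_zero_iff_dvd.mpr (dvd_act_firstCoeff_add_lastCoeff_mul hAC' hB' hαδ' hγβ'), ?_,
    hnorm.trans hs.neg, hparity.trans (hs2.trans (Int.modEq_iff_dvd.mpr ⟨-s, by ring⟩))⟩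
  linear_combination (α * δ - β * γ + 1) * (D * hdet) + (α * δ - β * γ) ^ 2 * hdisc

/-- If `M = (α, β; γ, δ) ∈ SL₂(ℤ)` satisfies `α ≡ −δ` and
`γ ≡ −εβ (mod p)`, and `[A,B,C] ∈ Q_{ns,D,s}`, then `[A,B,C]·M ∈ Q_{ns,D,−s}`. -/
theorem stmt_5 (p : ℕ) (hp : p.Prime) (hp2 : p ≠ 2)
    (ε : ℤ) (hε1 : ε ≡ 1 [ZMOD 4]) (hεns : ¬ IsSquare (ε : ZMod p))
    (D s : ℤ)
    (α β γ δ : ℤ) (hdet : α * δ - β * γ = 1)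
    (hαδ : α ≡ -δ [ZMOD (p : ℤ)]) (hγβ : γ ≡ -(ε * β) [ZMOD (p : ℤ)])
    (A B C : ℤ)
    (hB : B ≡ 0 [ZMOD (p : ℤ)]) (hAC : A + C * ε ≡ 0 [ZMOD (p : ℤ)])
    (hdisc : B ^ 2 - 4 * A * C = D)
    (hs : A - C * ε ≡ s [ZMOD ((p : ℤ) ^ 2)]) (hs2 : B ≡ s [ZMOD 2])
    (A' B' C' : ℤ)
    (hA' : A' = A * α ^ 2 + B * α * γ + C * γ ^ 2)
    (hB' : B' = 2 * A * α * β + B * (α * δ + β * γ) + 2 * C * γ * δ)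
    (hC' : C' = A * β ^ 2 + B * β * δ + C * δ ^ 2) :
    B' ≡ 0 [ZMOD (p : ℤ)] ∧ A' + C' * ε ≡ 0 [ZMOD (p : ℤ)] ∧
      B' ^ 2 - 4 * A' * C' = D ∧
      A' - C' * ε ≡ -s [ZMOD ((p : ℤ) ^ 2)] ∧ B' ≡ -s [ZMOD 2] :=
  stmt_5_general p ε D s α β γ δ hdet hαδ hγβ A B C hB hAC hdisc hs hs2 A' B' C' hA' hB' hC'
end

section
/- Let D and s be integers with D not divisible by p. Suppose [A,B,C] and [A',B',C'] both belong to Q_{ns,D,s} and that M = (α, β; γ, δ) ∈ SL₂(ℤ) satisfies [A,B,C]·M = [A',B',C']. Then α ≡ δ (mod p) and γ ≡ εβ (mod p). -/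
/-!
Modulo `p` a form of `Q_ns` is `C · (Y² - εX²)`, and `A - Cε ≡ -2Cε` shows that `C` is the same for
all forms of `Q_{ns,D,s}`. Moreover `D ≡ 4C²ε`, so `p ∤ D` makes `2`, `C` and `ε` units mod `p`.
Hence `M` is, mod `p`, an isometry of determinant one of `Y² - εX²`, i.e. `Mᵀ Q M = Q` with
`Q = diag(-ε, 1)`; together with `adj(Mᵀ) Mᵀ = 1` this gives `Q M = adj(Mᵀ) Q`, whose second row
reads `γ = εβ` and `δ = α`.
-/

theorem eq_and_eq_mul_of_isometry {R : Type*} [CommRing R] {ε α β γ δ : R}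
    (hdet : α * δ - β * γ = 1) (h11 : γ ^ 2 - ε * α ^ 2 = -ε)
    (h12 : γ * δ - ε * α * β = 0) (h22 : δ ^ 2 - ε * β ^ 2 = 1) :
    α = δ ∧ γ = ε * β := by
  constructor
  · linear_combination -α * h22 + β * h12 + δ * hdet
  · linear_combination -β * h11 + α * h12 - γ * hdet

theorem eq_and_eq_mul_of_transform_eq {K : Type*} [Field K] {ε a b c a' b' c' α β γ δ : K}
    (ha : a + c * ε = 0) (hb : b = 0) (ha' : a' + c' * ε = 0) (hb' : b' = 0)
    (hs : a - c * ε = a' - c' * ε) (hdisc : b ^ 2 - 4 * a * c ≠ 0)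
    (hdet : α * δ - β * γ = 1)
    (hA : a' = a * α ^ 2 + b * α * γ + c * γ ^ 2)
    (hB : b' = 2 * a * α * β + b * (α * δ + β * γ) + 2 * c * γ * δ)
    (hC : c' = a * β ^ 2 + b * β * δ + c * δ ^ 2) :
    α = δ ∧ γ = ε * β := by
  rw [show b ^ 2 - 4 * a * c = 2 * 2 * c * c * ε by linear_combination b * hb - 4 * c * ha] at hdisc
  simp only [mul_ne_zero_iff] at hdisc
  obtain ⟨⟨⟨⟨h2, -⟩, hc⟩, -⟩, hε⟩ := hdisc
  obtain rfl : c = c' :=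
    mul_left_cancel₀ (mul_ne_zero h2 hε) (by linear_combination -hs - ha' + ha)
  obtain rfl : a = a' := by linear_combination ha - ha'
  subst hb hb'
  obtain rfl : a = -(c * ε) := eq_neg_of_add_eq_zero_left ha
  refine eq_and_eq_mul_of_isometry hdet ?_ ?_ ?_
  · exact mul_left_cancel₀ hc (by linear_combination -hA)
  · exact mul_left_cancel₀ (mul_ne_zero h2 hc) (by linear_combination -hB)
  · exact mul_left_cancel₀ hc (by linear_combination -hC)

theorem stmt_7_general (p : ℕ) (hp : p.Prime)
    (ε : ℤ)
    (D s : ℤ) (hpD : ¬ (p : ℤ) ∣ D)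
    (A B C : ℤ)
    (hB : B ≡ 0 [ZMOD (p : ℤ)]) (hAC : A + C * ε ≡ 0 [ZMOD (p : ℤ)])
    (hdisc : B ^ 2 - 4 * A * C = D)
    (hs : A - C * ε ≡ s [ZMOD ((p : ℤ) ^ 2)])
    (A' B' C' : ℤ)
    (hB'' : B' ≡ 0 [ZMOD (p : ℤ)]) (hAC' : A' + C' * ε ≡ 0 [ZMOD (p : ℤ)])
    (hs' : A' - C' * ε ≡ s [ZMOD ((p : ℤ) ^ 2)])
    (α β γ δ : ℤ) (hdet : α * δ - β * γ = 1)
    (hA' : A' = A * α ^ 2 + B * α * γ + C * γ ^ 2)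
    (hB' : B' = 2 * A * α * β + B * (α * δ + β * γ) + 2 * C * γ * δ)
    (hC' : C' = A * β ^ 2 + B * β * δ + C * δ ^ 2) :
    α ≡ δ [ZMOD (p : ℤ)] ∧ γ ≡ ε * β [ZMOD (p : ℤ)] := by
  have := Fact.mk hp
  have reduce {x y : ℤ} : x ≡ y [ZMOD p] → (x : ZMod p) = y := (ZMod.intCast_eq_intCast_iff x y p).mpr
  have hpp : (p : ℤ) ∣ (p : ℤ) ^ 2 := dvd_pow_self _ two_ne_zero
  have hb := reduce hB; have hb' := reduce hB''
  have hac := reduce hAC; have hac' := reduce hAC'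
  have hsc := (reduce (hs.of_dvd hpp)).trans (reduce (hs'.of_dvd hpp)).symm
  have hD : (D : ZMod p) ≠ 0 := by rwa [Ne, ZMod.intCast_zmod_eq_zero_iff_dvd]
  apply_fun (Int.cast : ℤ → ZMod p) at hdisc hdet hA' hB' hC'
  push_cast at hb hb' hac hac' hsc hdisc hdet hA' hB' hC'
  obtain ⟨had, hgb⟩ := eq_and_eq_mul_of_transform_eq hac hb hac' hb' hsc (hdisc ▸ hD) hdet hA' hB' hC'
  exact ⟨(ZMod.intCast_eq_intCast_iff _ _ p).mp had,
    (ZMod.intCast_eq_intCast_iff _ _ p).mp (by push_cast; exact hgb)⟩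

/-- Injectivity step in Proposition 5.3 of the paper. If `p ∤ D` and
`M = (α, β; γ, δ) ∈ SL₂(ℤ)` carries a form of `Q_{ns,D,s}` to a form of
`Q_{ns,D,s}`, then `α ≡ δ (mod p)` and `γ ≡ εβ (mod p)`, i.e. `M ∈ Γ_ns`. -/
theorem stmt_7 (p : ℕ) (hp : p.Prime) (hp2 : p ≠ 2)
    (ε : ℤ) (hε1 : ε ≡ 1 [ZMOD 4]) (hεns : ¬ IsSquare (ε : ZMod p))
    (D s : ℤ) (hpD : ¬ (p : ℤ) ∣ D)
    (A B C : ℤ)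
    (hB : B ≡ 0 [ZMOD (p : ℤ)]) (hAC : A + C * ε ≡ 0 [ZMOD (p : ℤ)])
    (hdisc : B ^ 2 - 4 * A * C = D)
    (hs : A - C * ε ≡ s [ZMOD ((p : ℤ) ^ 2)]) (hs2 : B ≡ s [ZMOD 2])
    (A' B' C' : ℤ)
    (hB'' : B' ≡ 0 [ZMOD (p : ℤ)]) (hAC' : A' + C' * ε ≡ 0 [ZMOD (p : ℤ)])
    (hdisc' : B' ^ 2 - 4 * A' * C' = D)
    (hs' : A' - C' * ε ≡ s [ZMOD ((p : ℤ) ^ 2)]) (hs2' : B' ≡ s [ZMOD 2])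
    (α β γ δ : ℤ) (hdet : α * δ - β * γ = 1)
    (hA' : A' = A * α ^ 2 + B * α * γ + C * γ ^ 2)
    (hB' : B' = 2 * A * α * β + B * (α * δ + β * γ) + 2 * C * γ * δ)
    (hC' : C' = A * β ^ 2 + B * β * δ + C * δ ^ 2) :
    α ≡ δ [ZMOD (p : ℤ)] ∧ γ ≡ ε * β [ZMOD (p : ℤ)] :=
  stmt_7_general p hp ε D s hpD A B C hB hAC hdisc hs A' B' C' hB'' hAC' hs' α β γ δ hdet hA' hB'
    hC'
end

section
/- Let X ∈ GL₂(𝔽_p) and let Y ∈ C_ns. Assume that X and Y have the same trace and the same determinant, and that tr(X)² − 4·det(X) ≠ 0 in 𝔽_p (i.e. the common characteristic polynomial has simple roots). Then there exists g ∈ SL₂(𝔽_p) such that g·X·g⁻¹ = Y. -/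
/-!
Since the discriminant of `X` is not a square, `X 1 0 ≠ 0`, and `Y 1 0 = bε ≠ 0`; so `e₀` is a
cyclic vector for both matrices, and in the basis `e₀, Ae₀` each matrix `A` becomes the companion
matrix of the common characteristic polynomial. This gives `M ∈ GL₂` with `M X = Y M`. To land in
`SL₂`, replace `M` by `M (u + vX)`, which still conjugates `X` to `Y`: the determinant of `u + vX`
is the binary quadratic form `u² + uv·tr X + v²·det X` of nonzero discriminant, and over a finite
field of odd characteristic such a form takes every value, in particular `(det M)⁻¹`.
-/

open Polynomial

namespace Matrix

section CommRing

variable {R : Type*} [CommRing R]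

/-- The companion matrix of `X² - t X + d`. -/
def companionFinTwo (t d : R) : Matrix (Fin 2) (Fin 2) R := !![0, -d; 1, t]

/-- The matrix with columns `e₀` and `A e₀`. -/
def cyclicBasis (A : Matrix (Fin 2) (Fin 2) R) : Matrix (Fin 2) (Fin 2) R :=
  !![1, A 0 0; 0, A 1 0]

lemma det_cyclicBasis (A : Matrix (Fin 2) (Fin 2) R) : (cyclicBasis A).det = A 1 0 := by
  simp [cyclicBasis, det_fin_two_of]

lemma mul_cyclicBasis (A : Matrix (Fin 2) (Fin 2) R) :
    A * cyclicBasis A = cyclicBasis A * companionFinTwo A.trace A.det := by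
  ext i j
  fin_cases i <;> fin_cases j <;>
    simp [cyclicBasis, companionFinTwo, trace_fin_two, det_fin_two, mul_apply] <;> ring

lemma det_smul_one_add_smul (u v : R) (A : Matrix (Fin 2) (Fin 2) R) :
    (u • 1 + v • A).det = u ^ 2 + u * v * A.trace + v ^ 2 * A.det := by
  rw [det_fin_two, trace_fin_two, det_fin_two]
  simp only [add_apply, smul_apply, one_apply_eq, one_apply_ne (by decide : (0 : Fin 2) ≠ 1),
    one_apply_ne (by decide : (1 : Fin 2) ≠ 0), smul_eq_mul]
  ring

lemma apply_one_zero_ne_zero_of_not_isSquare {A : Matrix (Fin 2) (Fin 2) R}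
    (h : ¬IsSquare (A.trace ^ 2 - 4 * A.det)) : A 1 0 ≠ 0 := by
  intro h10
  refine h ⟨A 0 0 - A 1 1, ?_⟩
  rw [trace_fin_two, det_fin_two, h10]
  ring

end CommRing

variable {K : Type*} [Field K]

lemma exists_mul_eq_mul_of_trace_eq_of_det_eq {A B : Matrix (Fin 2) (Fin 2) K}
    (hA : A 1 0 ≠ 0) (hB : B 1 0 ≠ 0) (htr : A.trace = B.trace) (hdet : A.det = B.det) :
    ∃ M : Matrix (Fin 2) (Fin 2) K, IsUnit M.det ∧ M * A = B * M := by
  have hPA : IsUnit (cyclicBasis A).det := by simpa [det_cyclicBasis] using hA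
  have hPB : IsUnit (cyclicBasis B).det := by simpa [det_cyclicBasis] using hB
  refine ⟨cyclicBasis B * (cyclicBasis A)⁻¹, ?_, ?_⟩
  · simpa [det_mul] using hPB.mul (isUnit_nonsing_inv_det _ hPA)
  · have hAC : (cyclicBasis A)⁻¹ * A = companionFinTwo A.trace A.det * (cyclicBasis A)⁻¹ := by
      calc (cyclicBasis A)⁻¹ * A
          = (cyclicBasis A)⁻¹ * (A * cyclicBasis A) * (cyclicBasis A)⁻¹ := by
            rw [Matrix.mul_assoc, Matrix.mul_assoc, mul_nonsing_inv _ hPA, Matrix.mul_one]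
        _ = companionFinTwo A.trace A.det * (cyclicBasis A)⁻¹ := by
            rw [mul_cyclicBasis, ← Matrix.mul_assoc, nonsing_inv_mul _ hPA, Matrix.one_mul]
    rw [Matrix.mul_assoc, hAC, ← Matrix.mul_assoc, htr, hdet, ← mul_cyclicBasis, Matrix.mul_assoc]

end Matrix

namespace FiniteField

variable {K : Type*} [Field K] [Fintype K]

lemma exists_sq_sub_mul_sq_eq (hK : ringChar K ≠ 2) {D : K} (hD : D ≠ 0) (c : K) :
    ∃ s v : K, s ^ 2 - D * v ^ 2 = c := by
  obtain ⟨s, v, hsv⟩ := exists_root_sum_quadratic (f := X ^ 2)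
    (g := C (-D) * X ^ 2 + C 0 * X + C (-c)) (degree_X_pow 2)
    (degree_quadratic (neg_ne_zero.mpr hD)) (odd_card_of_char_ne_two hK)
  refine ⟨s, v, ?_⟩
  simp only [eval_add, eval_mul, eval_pow, eval_X, eval_C, zero_mul] at hsv
  linear_combination hsv

lemma exists_sq_add_mul_add_mul_sq_eq (hK : ringChar K ≠ 2) {t d : K} (hΔ : t ^ 2 - 4 * d ≠ 0)
    (c : K) : ∃ u v : K, u ^ 2 + u * v * t + v ^ 2 * d = c := by
  have h2 : (2 : K) ≠ 0 := Ring.two_ne_zero hK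
  obtain ⟨s, v, hsv⟩ := exists_sq_sub_mul_sq_eq hK hΔ (4 * c)
  refine ⟨(s - v * t) / 2, v, ?_⟩
  field_simp
  linear_combination hsv

end FiniteField

namespace Matrix

variable {K : Type*} [Field K] [Fintype K]

lemma exists_specialLinearGroup_conj_eq (hK : ringChar K ≠ 2) {A B : Matrix (Fin 2) (Fin 2) K}
    (hA : A 1 0 ≠ 0) (hB : B 1 0 ≠ 0) (htr : A.trace = B.trace) (hdet : A.det = B.det)
    (hΔ : A.trace ^ 2 - 4 * A.det ≠ 0) :
    ∃ g : SpecialLinearGroup (Fin 2) K, (g : Matrix (Fin 2) (Fin 2) K) * A *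
      ((g⁻¹ : SpecialLinearGroup (Fin 2) K) : Matrix (Fin 2) (Fin 2) K) = B := by
  obtain ⟨M, hM, hMA⟩ := exists_mul_eq_mul_of_trace_eq_of_det_eq hA hB htr hdet
  obtain ⟨u, v, huv⟩ := FiniteField.exists_sq_add_mul_add_mul_sq_eq hK hΔ M.det⁻¹
  set N := u • (1 : Matrix (Fin 2) (Fin 2) K) + v • A
  have hNA : Commute N A :=
    ((Commute.one_left A).smul_left u).add_left ((Commute.refl A).smul_left v)
  have hg : (M * N).det = 1 := by
    rw [det_mul, det_smul_one_add_smul, huv, mul_inv_cancel₀ hM.ne_zero]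
  have hgA : M * N * A = B * (M * N) := by
    rw [Matrix.mul_assoc, hNA.eq, ← Matrix.mul_assoc, hMA, Matrix.mul_assoc]
  refine ⟨⟨M * N, hg⟩, ?_⟩
  change M * N * A * adjugate (M * N) = B
  rw [hgA, Matrix.mul_assoc, mul_adjugate, hg, one_smul, Matrix.mul_one]

end Matrix

theorem stmt_8_general (p : ℕ) (hp : p.Prime) (hp2 : p ≠ 2)
    (ε : ℤ) (hεns : ¬ IsSquare (ε : ZMod p))
    (X Y : Matrix (Fin 2) (Fin 2) (ZMod p))
    (hYform : ∃ a b : ZMod p, Y = !![a, b; b * (ε : ZMod p), a])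
    (htr : X.trace = Y.trace) (hdet : X.det = Y.det)
    (hsimple : X.trace ^ 2 - 4 * X.det ≠ 0) :
    ∃ g : Matrix.SpecialLinearGroup (Fin 2) (ZMod p),
      (g : Matrix (Fin 2) (Fin 2) (ZMod p)) * X *
        ((g⁻¹ : Matrix.SpecialLinearGroup (Fin 2) (ZMod p)) :
          Matrix (Fin 2) (Fin 2) (ZMod p)) = Y := by
  have := Fact.mk hp
  obtain ⟨a, b, rfl⟩ := hYform
  have hΔ : X.trace ^ 2 - 4 * X.det = (2 * b) ^ 2 * ε := by
    rw [htr, hdet, Matrix.trace_fin_two_of, Matrix.det_fin_two_of]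
    ring
  have hb : 2 * b ≠ 0 := by
    intro h
    simp [hΔ, h] at hsimple
  have hXns : ¬IsSquare (X.trace ^ 2 - 4 * X.det) := fun h ↦ hεns <| by
    simpa [hΔ, mul_div_cancel_left₀ _ (pow_ne_zero 2 hb)] using h.div (IsSquare.sq (2 * b))
  have hε : (ε : ZMod p) ≠ 0 := fun h ↦ hεns ⟨0, by rw [h, mul_zero]⟩
  refine Matrix.exists_specialLinearGroup_conj_eq (by rwa [ZMod.ringChar_zmod_n])
    (Matrix.apply_one_zero_ne_zero_of_not_isSquare hXns) ?_ htr hdet hsimple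
  simpa using mul_ne_zero (right_ne_zero_of_mul hb) hε

/-- If `X ∈ GL₂(𝔽_p)` and `Y ∈ C_ns` have the same trace and
determinant, and the common characteristic polynomial has simple roots
(`tr(X)² − 4·det(X) ≠ 0`), then `X` and `Y` are conjugate by an element of
`SL₂(𝔽_p)`. -/
theorem stmt_8 (p : ℕ) (hp : p.Prime) (hp2 : p ≠ 2)
    (ε : ℤ) (hε1 : ε ≡ 1 [ZMOD 4]) (hεns : ¬ IsSquare (ε : ZMod p))
    (X Y : Matrix (Fin 2) (Fin 2) (ZMod p))
    (hX : IsUnit X.det)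
    (hYform : ∃ a b : ZMod p, Y = !![a, b; b * (ε : ZMod p), a])
    (hYunit : IsUnit Y.det)
    (htr : X.trace = Y.trace) (hdet : X.det = Y.det)
    (hsimple : X.trace ^ 2 - 4 * X.det ≠ 0) :
    ∃ g : Matrix.SpecialLinearGroup (Fin 2) (ZMod p),
      (g : Matrix (Fin 2) (Fin 2) (ZMod p)) * X *
        ((g⁻¹ : Matrix.SpecialLinearGroup (Fin 2) (ZMod p)) :
          Matrix (Fin 2) (Fin 2) (ZMod p)) = Y :=
  stmt_8_general p hp hp2 ε hεns X Y hYform htr hdet hsimple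
end

section
/- Let D and s be integers with D not divisible by p and s² ≡ εD (mod 4p²). Then for every integral binary quadratic form [A,B,C] with B² − 4AC = D there exists M ∈ SL₂(ℤ) such that [A,B,C]·M ∈ Q_{ns,D,s}. In particular, if s² ≡ εD (mod 4p²) and p ∤ D, the set Q_{ns,D,s} is nonempty whenever some integral form of discriminant D exists. -/
/-!
Since `p ∤ D`, the form `[A, B, C]` is nondegenerate modulo the odd prime `p`, so it represents
`s / 2` modulo `p`, necessarily by a nonzero vector because `s² ≡ εD ≢ 0`. Lift that vector to a
coprime pair `(α, γ)` and complete it to a matrix of `SL₂(ℤ)`; adding multiples of the first column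
to the second shifts `B'` by multiples of `2A' ≡ s`, a unit mod `p²`, so one may take
`2A' ≡ s (mod p)` and `B' ≡ 0 (mod p²)`. Then `D = B'² - 4A'C'` and `s² ≡ εD` give
`4A'(A' + εC') ≡ (2A' - s)(2A' + s) ≡ 0 (mod p)` and `4A'(A' - εC' - s) ≡ (2A' - s)² ≡ 0 (mod p²)`,
and `4A'` is prime to `p`. Finally `s² ≡ εD ≡ B'² (mod 2)` gives the parity condition.
-/

namespace FiniteField

open Polynomial

variable {F : Type*} [Field F] [Fintype F]

theorem exists_binary_form_eq_of_ne_zero (hF : ringChar F ≠ 2) {a b c : F} (ha : a ≠ 0)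
    (hd : discrim a b c ≠ 0) (t : F) : ∃ x y, a * x ^ 2 + b * x * y + c * y ^ 2 = t := by
  -- `u² - (b² - 4ac) y² = 4at` is solvable over a finite field, and
  -- `4a (ax² + bxy + cy²) = (2ax + by)² - (b² - 4ac) y²`.
  obtain ⟨u, y, huy⟩ := exists_root_sum_quadratic (f := X ^ 2 - C (4 * a * t))
    (g := C (-discrim a b c) * X ^ 2) (degree_X_pow_sub_C two_pos _)
    (degree_C_mul_X_pow 2 (neg_ne_zero.mpr hd)) (odd_card_of_char_ne_two hF)
  simp only [eval_sub, eval_pow, eval_X, eval_C, eval_mul, discrim] at huy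
  have h2 : (2 : F) ≠ 0 := Ring.two_ne_zero hF
  refine ⟨(u - b * y) / (2 * a), y, ?_⟩
  field_simp
  linear_combination huy

theorem exists_binary_form_eq (hF : ringChar F ≠ 2) {a b c : F} (hd : discrim a b c ≠ 0) (t : F) :
    ∃ x y, a * x ^ 2 + b * x * y + c * y ^ 2 = t := by
  by_cases ha : a = 0
  · by_cases hc : c = 0
    · have hb : b ≠ 0 := by rintro rfl; simp [discrim, ha] at hd
      exact ⟨1, t / b, by field_simp; simp [ha, hc]⟩
    · obtain ⟨x, y, h⟩ := exists_binary_form_eq_of_ne_zero hF hc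
        (by rwa [discrim, mul_right_comm, ← discrim]) t
      exact ⟨y, x, by linear_combination h⟩
  · exact exists_binary_form_eq_of_ne_zero hF ha hd t

end FiniteField

theorem Int.exists_isCoprime_modEq {n x : ℤ} (h : IsCoprime n x) (y : ℤ) :
    ∃ γ, IsCoprime x γ ∧ γ ≡ y [ZMOD n] := by
  obtain ⟨u, v, huv⟩ := h
  refine ⟨y + n * u * (1 - y), ⟨v * (1 - y), 1, by linear_combination (1 - y) * huv⟩, ?_⟩
  exact Int.modEq_iff_dvd.mpr ⟨-u * (1 - y), by ring⟩

theorem IsCoprime.of_dvd_sub {R : Type*} [CommRing R] {n a b : R} (h : IsCoprime n a)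
    (hab : n ∣ b - a) : IsCoprime n b := by
  obtain ⟨k, hk⟩ := hab
  rw [show b = a + n * k by linear_combination hk]
  exact h.add_mul_left_right k

theorem Int.isCoprime_of_intCast_ne_zero {p : ℕ} [Fact p.Prime] {a : ℤ} (h : (a : ZMod p) ≠ 0) :
    IsCoprime (p : ℤ) a :=
  (ZMod.coe_int_isUnit_iff_isCoprime a p).mp (isUnit_iff_ne_zero.mpr h)

theorem ZMod.intCast_ne_zero_of_sq_modEq {p : ℕ} [Fact p.Prime] {ε D s : ℤ}
    (h : s ^ 2 ≡ ε * D [ZMOD p]) (hε : (ε : ZMod p) ≠ 0) (hD : (D : ZMod p) ≠ 0) :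
    (s : ZMod p) ≠ 0 := by
  have h' := (ZMod.intCast_eq_intCast_iff _ _ p).mpr h
  push_cast at h'
  exact fun h0 => mul_ne_zero hε hD (by rw [← h', h0, zero_pow two_ne_zero])

theorem ZMod.exists_isCoprime_intCast_eq {p : ℕ} [Fact p.Prime] {x y : ZMod p}
    (h : x ≠ 0 ∨ y ≠ 0) : ∃ α γ : ℤ, IsCoprime α γ ∧ (α : ZMod p) = x ∧ (γ : ZMod p) = y := by
  wlog hx : x ≠ 0 generalizing x y
  · obtain ⟨γ, α, hγα, rfl, rfl⟩ := this h.symm (h.resolve_left hx)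
    exact ⟨α, γ, hγα.symm, rfl, rfl⟩
  have hpx : IsCoprime (p : ℤ) (cast x : ℤ) :=
    Int.isCoprime_of_intCast_ne_zero (by rwa [ZMod.intCast_zmod_cast])
  obtain ⟨γ, hxγ, hγ⟩ := Int.exists_isCoprime_modEq hpx (cast y)
  refine ⟨cast x, γ, hxγ, ZMod.intCast_zmod_cast x, ?_⟩
  rw [(ZMod.intCast_eq_intCast_iff _ _ p).mpr hγ, ZMod.intCast_zmod_cast]

theorem exists_isCoprime_dvd_two_mul_form_sub {p : ℕ} [Fact p.Prime] (hp2 : p ≠ 2)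
    {A B C s : ℤ} (hD : ((B ^ 2 - 4 * A * C : ℤ) : ZMod p) ≠ 0) (hs : (s : ZMod p) ≠ 0) :
    ∃ α γ : ℤ, IsCoprime α γ ∧ (p : ℤ) ∣ 2 * (A * α ^ 2 + B * α * γ + C * γ ^ 2) - s := by
  have hchar : ringChar (ZMod p) ≠ 2 := by rwa [ZMod.ringChar_zmod_n]
  have h2 : (2 : ZMod p) ≠ 0 := Ring.two_ne_zero hchar
  obtain ⟨x, y, hxy⟩ := FiniteField.exists_binary_form_eq hchar (a := A) (b := B) (c := C)
    (by rw [discrim]; exact_mod_cast hD) (s / 2)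
  obtain ⟨α, γ, hαγ, rfl, rfl⟩ := ZMod.exists_isCoprime_intCast_eq (x := x) (y := y) (by
    by_contra! h0
    exact div_ne_zero hs h2 (by simpa [h0.1, h0.2] using hxy.symm))
  refine ⟨α, γ, hαγ, (ZMod.intCast_zmod_eq_zero_iff_dvd _ p).mp ?_⟩
  push_cast [hxy]
  rw [mul_div_cancel₀ _ h2, sub_self]

/-- Shifting `(β, δ)` by `t • (α, γ)` keeps the determinant and shifts the middle coefficient by
`t · 2 (Aα² + Bαγ + Cγ²)`. -/
theorem exists_det_eq_one_dvd_middle_coeff {A B C α γ m : ℤ} (hαγ : IsCoprime α γ)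
    (hm : IsCoprime m (2 * (A * α ^ 2 + B * α * γ + C * γ ^ 2))) :
    ∃ β δ : ℤ, α * δ - β * γ = 1 ∧ m ∣ 2 * A * α * β + B * (α * δ + β * γ) + 2 * C * γ * δ := by
  obtain ⟨u, v, huv⟩ := hαγ
  obtain ⟨a, b, hab⟩ := hm
  set B₀ := 2 * A * α * (-v) + B * (α * u + -v * γ) + 2 * C * γ * u
  refine ⟨-v - b * B₀ * α, u - b * B₀ * γ, by linear_combination huv, B₀ * a, ?_⟩
  linear_combination -B₀ * hab

theorem add_mul_modEq_zero_of_discrim {n A B C D ε s : ℤ} (hD : B ^ 2 - 4 * A * C = D)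
    (hs : s ^ 2 ≡ ε * D [ZMOD n]) (hA : IsCoprime n (4 * A)) (hAs : n ∣ 2 * A - s)
    (hB : n ∣ B ^ 2) : A + C * ε ≡ 0 [ZMOD n] := by
  have key : 4 * A * (A + C * ε) = (2 * A - s) * (2 * A + s) + ε * B ^ 2 - (ε * D - s ^ 2) := by
    rw [← hD]; ring
  refine Int.modEq_zero_iff_dvd.mpr (hA.dvd_of_dvd_mul_left ?_)
  rw [key]
  exact ((hAs.mul_right _).add (hB.mul_left ε)).sub hs.dvd

theorem sub_mul_modEq_of_discrim {n A B C D ε s : ℤ} (hD : B ^ 2 - 4 * A * C = D)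
    (hs : s ^ 2 ≡ ε * D [ZMOD n]) (hA : IsCoprime n (4 * A)) (hAs : n ∣ (2 * A - s) ^ 2)
    (hB : n ∣ B ^ 2) : A - C * ε ≡ s [ZMOD n] := by
  have key : 4 * A * (A - C * ε - s) = (2 * A - s) ^ 2 + (ε * D - s ^ 2) - ε * B ^ 2 := by
    rw [← hD]; ring
  refine (Int.modEq_iff_dvd.mpr (hA.dvd_of_dvd_mul_left ?_)).symm
  rw [key]
  exact (hAs.add hs.dvd).sub (hB.mul_left ε)

theorem modEq_two_of_sq_modEq_discrim {A B C D ε s : ℤ} (hD : B ^ 2 - 4 * A * C = D)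
    (hs : s ^ 2 ≡ ε * D [ZMOD 2]) (hε : ε ≡ 1 [ZMOD 2]) : B ≡ s [ZMOD 2] := by
  have hs₂ := (ZMod.intCast_eq_intCast_iff _ _ 2).mpr hs
  have hε₂ := (ZMod.intCast_eq_intCast_iff _ _ 2).mpr hε
  refine (ZMod.intCast_eq_intCast_iff _ _ 2).mp ?_
  push_cast [← hD, hε₂, ZMod.pow_card] at hs₂ ⊢
  rw [hs₂, show (4 : ZMod 2) = 0 by decide]
  ring

/-- Surjectivity step in Proposition 5.3 of the paper. If `p ∤ D`
and `s² ≡ εD (mod 4p²)`, then every integral binary quadratic form of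
discriminant `D` can be carried into `Q_{ns,D,s}` by some `M ∈ SL₂(ℤ)`.
In particular `Q_{ns,D,s}` is nonempty whenever a form of discriminant `D`
exists. -/
theorem stmt_9 (p : ℕ) (hp : p.Prime) (hp2 : p ≠ 2)
    (ε : ℤ) (hε1 : ε ≡ 1 [ZMOD 4]) (hεns : ¬ IsSquare (ε : ZMod p))
    (D s : ℤ) (hpD : ¬ (p : ℤ) ∣ D)
    (hsD : s ^ 2 ≡ ε * D [ZMOD (4 * (p : ℤ) ^ 2)])
    (A B C : ℤ) (hdisc : B ^ 2 - 4 * A * C = D) :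
    ∃ α β γ δ : ℤ, α * δ - β * γ = 1 ∧
      ∃ A' B' C' : ℤ,
        A' = A * α ^ 2 + B * α * γ + C * γ ^ 2 ∧
        B' = 2 * A * α * β + B * (α * δ + β * γ) + 2 * C * γ * δ ∧
        C' = A * β ^ 2 + B * β * δ + C * δ ^ 2 ∧
        B' ≡ 0 [ZMOD (p : ℤ)] ∧ A' + C' * ε ≡ 0 [ZMOD (p : ℤ)] ∧
        B' ^ 2 - 4 * A' * C' = D ∧
        A' - C' * ε ≡ s [ZMOD ((p : ℤ) ^ 2)] ∧ B' ≡ s [ZMOD 2] := by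
  have := Fact.mk hp
  have hsD₂ : s ^ 2 ≡ ε * D [ZMOD (p : ℤ) ^ 2] := hsD.of_mul_left 4
  have hsD₁ : s ^ 2 ≡ ε * D [ZMOD p] := hsD₂.of_dvd (dvd_pow_self _ two_ne_zero)
  have hD : (D : ZMod p) ≠ 0 := mt (ZMod.intCast_zmod_eq_zero_iff_dvd D p).mp hpD
  have hs : (s : ZMod p) ≠ 0 :=
    ZMod.intCast_ne_zero_of_sq_modEq hsD₁ (fun h0 => hεns (h0 ▸ IsSquare.zero)) hD
  have hps : IsCoprime (p : ℤ) s := Int.isCoprime_of_intCast_ne_zero hs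
  obtain ⟨α, γ, hαγ, hAs⟩ := exists_isCoprime_dvd_two_mul_form_sub hp2 (hdisc ▸ hD) hs
  set A' := A * α ^ 2 + B * α * γ + C * γ ^ 2
  obtain ⟨β, δ, hdet, hB'⟩ := exists_det_eq_one_dvd_middle_coeff (A := A) (B := B) (C := C)
    hαγ (hps.of_dvd_sub hAs).pow_left
  set B' := 2 * A * α * β + B * (α * δ + β * γ) + 2 * C * γ * δ
  set C' := A * β ^ 2 + B * β * δ + C * δ ^ 2
  have hdisc' : B' ^ 2 - 4 * A' * C' = D := by
    rw [← hdisc]; linear_combination (α * δ - β * γ + 1) * (B ^ 2 - 4 * A * C) * hdet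
  have hp4A' : IsCoprime (p : ℤ) (4 * A') := by
    have hp2' : IsCoprime (p : ℤ) 2 := by
      exact_mod_cast Nat.isCoprime_iff_coprime.mpr ((Nat.coprime_primes hp Nat.prime_two).mpr hp2)
    refine (hp2'.mul_right hps).of_dvd_sub ?_
    rw [show 4 * A' - 2 * s = 2 * (2 * A' - s) by ring]
    exact hAs.mul_left 2
  have hB'sq : (p : ℤ) ^ 2 ∣ B' ^ 2 := hB'.trans (dvd_pow_self _ two_ne_zero)
  refine ⟨α, β, γ, δ, hdet, A', B', C', rfl, rfl, rfl,
    Int.modEq_zero_iff_dvd.mpr ((dvd_pow_self _ two_ne_zero).trans hB'),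
    add_mul_modEq_zero_of_discrim hdisc' hsD₁ hp4A' hAs
      ((dvd_pow_self _ two_ne_zero).trans hB'sq),
    hdisc',
    sub_mul_modEq_of_discrim hdisc' hsD₂ hp4A'.pow_left (pow_dvd_pow_of_dvd hAs 2) hB'sq,
    modEq_two_of_sq_modEq_discrim hdisc' (hsD.of_dvd ⟨2 * p ^ 2, by ring⟩)
      (hε1.of_dvd ⟨2, by norm_num⟩)⟩
end

section
/- Let X = (a, b; c, d) ∈ M_ns with trace t and determinant n, set D = t² − 4n, and assume p ∤ D. Let A = c, B = a − d, C = −b. Then gcd(A, B, C) = 1 if and only if the following optimality condition holds: for all rational numbers λ₁, λ₂ such that the matrix λ₁·I + λ₂·X has integer entries and belongs to M_ns, one has λ₁ ∈ ℤ and λ₂ ∈ ℤ. -/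
/-!
If `λ₁ I + λ₂ X` is integral then `λ₂ b`, `λ₂ c` and `λ₂ (a - d)` are integers, so the denominator
of `λ₂` divides `gcd(A, B, C)`; once `λ₂` is an integer, so is `λ₁ = a' - λ₂ a`.
Conversely, a prime `q` dividing `A`, `B` and `C` cannot be `p`, since then `p` would divide
`D = (a - d)² + 4bc`. Hence `q` is invertible mod `p`, and `(X - a I) / q` is a non-integral
combination that still lies in `M_ns`.
-/

theorem Rat.den_dvd_of_mul_eq_intCast {l : ℚ} {m k : ℤ} (h : l * m = k) : (l.den : ℤ) ∣ m := by
  rcases eq_or_ne m 0 with rfl | hm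
  · exact dvd_zero _
  · have hl : l = Rat.divInt k m := by
      rw [Rat.divInt_eq_div, ← h]
      field_simp
    exact hl ▸ Rat.den_dvd k m

theorem Rat.inv_natCast_ne_intCast {q : ℕ} (hq : 1 < q) (k : ℤ) : (q : ℚ)⁻¹ ≠ k := by
  intro h
  have hden := Rat.inv_natCast_den_of_pos (a := q) (by omega)
  rw [h, Rat.den_intCast] at hden
  omega

theorem Int.ModEq.cancel_left_of_not_dvd {p : ℕ} (hp : p.Prime) {q x y : ℤ}
    (hpq : ¬ (p : ℤ) ∣ q) (h : q * x ≡ q * y [ZMOD p]) : x ≡ y [ZMOD p] := by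
  rw [Int.modEq_iff_dvd, ← mul_sub] at *
  exact ((Nat.prime_iff_prime_int.mp hp).dvd_or_dvd h).resolve_left hpq

theorem dvd_discr_of_dvd {R : Type*} [CommRing R] {x a b c d : R} (had : x ∣ a - d) (hb : x ∣ b) :
    x ∣ (a + d) ^ 2 - 4 * (a * d - b * c) := by
  have hD : (a + d) ^ 2 - 4 * (a * d - b * c) = (a - d) ^ 2 + 4 * c * b := by ring
  rw [hD]
  exact dvd_add (dvd_pow had two_ne_zero) (dvd_mul_of_dvd_right hb _)

/-- `l₁ I + l₂ X` has integer entries and lies in `M_ns`, where `X = (a, b; c, d)`. -/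
def ScalarCombMemNs (p : ℕ) (ε a b c d : ℤ) (l₁ l₂ : ℚ) : Prop :=
  ∃ a' b' c' d' : ℤ,
    (a' : ℚ) = l₁ + l₂ * a ∧ (b' : ℚ) = l₂ * b ∧
    (c' : ℚ) = l₂ * c ∧ (d' : ℚ) = l₁ + l₂ * d ∧
    a' ≡ d' [ZMOD (p : ℤ)] ∧ b' * ε ≡ c' [ZMOD (p : ℤ)]

theorem exists_eq_intCast_of_gcd_eq_one {a b c d : ℤ}
    (hg : Int.gcd (Int.gcd c (a - d) : ℤ) (-b) = 1) {l₁ l₂ : ℚ} {a' b' c' d' : ℤ}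
    (ha' : (a' : ℚ) = l₁ + l₂ * a) (hb' : (b' : ℚ) = l₂ * b)
    (hc' : (c' : ℚ) = l₂ * c) (hd' : (d' : ℚ) = l₁ + l₂ * d) :
    (∃ k : ℤ, l₁ = k) ∧ (∃ k : ℤ, l₂ = k) := by
  have hb : (l₂.den : ℤ) ∣ -b :=
    Rat.den_dvd_of_mul_eq_intCast (k := -b') (by push_cast; rw [hb']; ring)
  have hc : (l₂.den : ℤ) ∣ c := Rat.den_dvd_of_mul_eq_intCast hc'.symm
  have had : (l₂.den : ℤ) ∣ a - d :=
    Rat.den_dvd_of_mul_eq_intCast (k := a' - d') (by push_cast; rw [ha', hd']; ring)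
  have hden : l₂.den = 1 := by
    have h := Int.dvd_coe_gcd (Int.dvd_coe_gcd hc had) hb
    rw [hg] at h
    exact Nat.dvd_one.mp (by exact_mod_cast h)
  have hl₂ : l₂ = l₂.num := ((Rat.den_eq_one_iff l₂).mp hden).symm
  refine ⟨⟨a' - l₂.num * a, ?_⟩, ⟨l₂.num, hl₂⟩⟩
  push_cast
  rw [ha', ← hl₂]
  ring

theorem scalarCombMemNs_sub_div {p : ℕ} (hp : p.Prime) {ε a b c d q : ℤ}
    (had : a ≡ d [ZMOD (p : ℤ)]) (hbc : b * ε ≡ c [ZMOD (p : ℤ)]) (hpq : ¬ (p : ℤ) ∣ q)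
    (hqb : q ∣ b) (hqc : q ∣ c) (hqad : q ∣ a - d) :
    ScalarCombMemNs p ε a b c d (-a * (q : ℚ)⁻¹) (q : ℚ)⁻¹ := by
  have hq : (q : ℚ) ≠ 0 := by
    rintro hq
    exact hpq (by simp [Int.cast_eq_zero.mp hq])
  obtain ⟨b₀, rfl⟩ := hqb
  obtain ⟨c₀, rfl⟩ := hqc
  obtain ⟨e, he⟩ := hqad
  obtain rfl : d = a - q * e := by linarith
  refine ⟨0, b₀, c₀, -e, by ring, by push_cast; field_simp, by push_cast; field_simp,
    by push_cast; field_simp; ring, ?_, ?_⟩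
  · refine Int.ModEq.cancel_left_of_not_dvd hp hpq ?_
    rw [mul_zero, mul_neg, ← he, Int.modEq_iff_dvd]
    simpa using Int.ModEq.dvd had
  · exact Int.ModEq.cancel_left_of_not_dvd hp hpq (by rwa [← mul_assoc])

theorem stmt_11_general (p : ℕ) (hp : p.Prime)
    (ε : ℤ)
    (a b c d : ℤ)
    (had : a ≡ d [ZMOD (p : ℤ)]) (hbc : b * ε ≡ c [ZMOD (p : ℤ)])
    (t n D : ℤ) (ht : t = a + d) (hn : n = a * d - b * c) (hD : D = t ^ 2 - 4 * n)
    (hpD : ¬ (p : ℤ) ∣ D)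
    (A B C : ℤ) (hA : A = c) (hB : B = a - d) (hC : C = -b) :
    (Int.gcd (Int.gcd A B : ℤ) C = 1) ↔
      ∀ l₁ l₂ : ℚ,
        (∃ a' b' c' d' : ℤ,
          (a' : ℚ) = l₁ + l₂ * a ∧ (b' : ℚ) = l₂ * b ∧
          (c' : ℚ) = l₂ * c ∧ (d' : ℚ) = l₁ + l₂ * d ∧
          a' ≡ d' [ZMOD (p : ℤ)] ∧ b' * ε ≡ c' [ZMOD (p : ℤ)]) →
        (∃ k : ℤ, l₁ = k) ∧ (∃ k : ℤ, l₂ = k) := by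
  subst ht hn hD hA hB hC
  constructor
  · rintro hg l₁ l₂ ⟨a', b', c', d', ha', hb', hc', hd', -, -⟩
    exact exists_eq_intCast_of_gcd_eq_one hg ha' hb' hc' hd'
  · intro hR
    by_contra hg
    obtain ⟨q, hq, hqg⟩ := Nat.exists_prime_and_dvd hg
    rw [Int.dvd_gcd_iff, Int.dvd_coe_gcd_iff, dvd_neg] at hqg
    obtain ⟨⟨hqc, hqad⟩, hqb⟩ := hqg
    have hpq : ¬ (p : ℤ) ∣ q := by
      intro hpq
      obtain rfl := (Nat.prime_dvd_prime_iff_eq hp hq).mp (Int.natCast_dvd_natCast.mp hpq)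
      exact hpD (dvd_discr_of_dvd hqad hqb)
    obtain ⟨-, k, hk⟩ := hR _ _ (scalarCombMemNs_sub_div hp had hbc hpq hqb hqc hqad)
    exact Rat.inv_natCast_ne_intCast hq.one_lt k (by simpa using hk)

/-- Proposition 4.1 of the paper (optimality criterion). Let
`X = (a,b;c,d) ∈ M_ns` with trace `t`, determinant `n`, `D = t² − 4n` and `p ∤ D`.
Set `A = c`, `B = a − d`, `C = −b`. Then `gcd(A,B,C) = 1` iff for all rationals
`λ₁, λ₂` such that `λ₁·I + λ₂·X` has integer entries and belongs to `M_ns`, both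
`λ₁` and `λ₂` are integers. -/
theorem stmt_11 (p : ℕ) (hp : p.Prime) (hp2 : p ≠ 2)
    (ε : ℤ) (hε1 : ε ≡ 1 [ZMOD 4]) (hεns : ¬ IsSquare (ε : ZMod p))
    (a b c d : ℤ)
    (had : a ≡ d [ZMOD (p : ℤ)]) (hbc : b * ε ≡ c [ZMOD (p : ℤ)])
    (t n D : ℤ) (ht : t = a + d) (hn : n = a * d - b * c) (hD : D = t ^ 2 - 4 * n)
    (hpD : ¬ (p : ℤ) ∣ D)
    (A B C : ℤ) (hA : A = c) (hB : B = a - d) (hC : C = -b) :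
    (Int.gcd (Int.gcd A B : ℤ) C = 1) ↔
      ∀ l₁ l₂ : ℚ,
        (∃ a' b' c' d' : ℤ,
          (a' : ℚ) = l₁ + l₂ * a ∧ (b' : ℚ) = l₂ * b ∧
          (c' : ℚ) = l₂ * c ∧ (d' : ℚ) = l₁ + l₂ * d ∧
          a' ≡ d' [ZMOD (p : ℤ)] ∧ b' * ε ≡ c' [ZMOD (p : ℤ)]) →
        (∃ k : ℤ, l₁ = k) ∧ (∃ k : ℤ, l₂ = k) :=
  stmt_11_general p hp ε a b c d had hbc t n D ht hn hD hpD A B C hA hB hC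
end

section
/- The dual lattice L_ns^∨ = {x ∈ V : β(x,y) ∈ ℤ for all y ∈ L_ns} is exactly the set of matrices (B, 2C; −2A, −B) with A, B, C ∈ ℤ such that B ≡ 0 (mod p) and A ≡ −Cε (mod p). -/
/-!
Write `x = (B, 2C; −2A, −B)`. Against `y = (B', 2C'; −2A', −B')` the form is
`β(x, y) = (BB' − 2AC' − 2CA') / (2p²)`. Pairing a trace-zero `x` with the three elements
`(0, 2p, 0)`, `(p², 0, 0)` and `(εp, 0, p)` of `L_ns` (coordinates `(A, B, C)`) forces
`p ∣ B`, `C ∈ ℤ` and `2A ∈ −2εC + 2pℤ`, which is the claimed shape. Conversely, `p ∣ B` and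
`2p ∣ B'` give `2p² ∣ BB'`, while `A' ≡ εC' (mod p²)` turns `AC' + CA'` into
`(A + εC)C'` modulo `p²`, a product of two multiples of `p`.
-/

open Matrix

def traceFreeMat (A B C : ℤ) : Matrix (Fin 2) (Fin 2) ℚ :=
  !![(B : ℚ), 2 * (C : ℚ); -2 * (A : ℚ), -(B : ℚ)]

def pairing (p : ℕ) (x y : Matrix (Fin 2) (Fin 2) ℚ) : ℚ :=
  -((x * y.adjugate).trace) / (4 * (p : ℚ) ^ 2)

def latticeNS (p : ℕ) (ε : ℤ) : Set (Matrix (Fin 2) (Fin 2) ℚ) :=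
  {y | ∃ A B C : ℤ, y = traceFreeMat A B C ∧
    A ≡ 0 [ZMOD (p : ℤ)] ∧ B ≡ 0 [ZMOD (p : ℤ)] ∧ C ≡ 0 [ZMOD (p : ℤ)] ∧
    B ≡ 0 [ZMOD 2] ∧ A ≡ ε * C [ZMOD ((p : ℤ) ^ 2)]}

lemma trace_mul_adjugate_of_trace_eq_zero {R : Type*} [CommRing R]
    {x : Matrix (Fin 2) (Fin 2) R} (hx : x.trace = 0) (A B C : R) :
    (x * !![B, 2 * C; -2 * A, -B].adjugate).trace
      = -2 * (B * x 0 0 - A * x 0 1 + C * x 1 0) := by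
  rw [trace_fin_two] at hx
  rw [adjugate_fin_two, trace_fin_two]
  simp only [mul_apply, Fin.sum_univ_two, of_apply, cons_val', cons_val_zero, cons_val_one,
    empty_val', cons_val_fin_one]
  linear_combination B * hx

lemma pairing_traceFreeMat_right (p : ℕ) {x : Matrix (Fin 2) (Fin 2) ℚ} (hx : x.trace = 0)
    (A B C : ℤ) :
    pairing p x (traceFreeMat A B C) = (B * x 0 0 - A * x 0 1 + C * x 1 0) / (2 * (p : ℚ) ^ 2) := by
  rw [pairing, traceFreeMat, trace_mul_adjugate_of_trace_eq_zero hx]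
  ring

lemma trace_traceFreeMat (A B C : ℤ) : (traceFreeMat A B C).trace = 0 := by
  simp [traceFreeMat, trace_fin_two]

lemma pairing_traceFreeMat (p : ℕ) (A B C A' B' C' : ℤ) :
    pairing p (traceFreeMat A B C) (traceFreeMat A' B' C')
      = ((B * B' - 2 * A * C' - 2 * C * A' : ℤ) : ℚ) / ((2 * (p : ℤ) ^ 2 : ℤ) : ℚ) := by
  rw [pairing_traceFreeMat_right p (trace_traceFreeMat A B C)]
  simp only [traceFreeMat, of_apply, cons_val', cons_val_zero, cons_val_one, empty_val',
    cons_val_fin_one]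
  push_cast
  ring

lemma two_mul_sq_dvd_of_congr {n ε A B C A' B' C' : ℤ} (hn : IsCoprime 2 n)
    (hB : n ∣ B) (hAC : n ∣ -(C * ε) - A)
    (hB' : n ∣ B') (hB'2 : 2 ∣ B') (hC' : n ∣ C') (hA'C' : n ^ 2 ∣ ε * C' - A') :
    2 * n ^ 2 ∣ B * B' - 2 * A * C' - 2 * C * A' := by
  obtain ⟨b, rfl⟩ := hB
  obtain ⟨b', rfl⟩ := hn.mul_dvd hB'2 hB'
  obtain ⟨c', rfl⟩ := hC'
  obtain ⟨m, hm⟩ := hAC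
  obtain ⟨s, hs⟩ := hA'C'
  obtain rfl : A = -(C * ε) - n * m := by linarith
  obtain rfl : A' = ε * (n * c') - n ^ 2 * s := by linarith
  exact ⟨b * b' + m * c' + C * s, by ring⟩

lemma pairing_isInt_of_mem (p : ℕ) (hp : p.Prime) (hp2 : p ≠ 2) (ε A B C : ℤ)
    (hB : B ≡ 0 [ZMOD (p : ℤ)]) (hA : A ≡ -(C * ε) [ZMOD (p : ℤ)])
    {y : Matrix (Fin 2) (Fin 2) ℚ} (hy : y ∈ latticeNS p ε) :
    ∃ k : ℤ, pairing p (traceFreeMat A B C) y = k := by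
  obtain ⟨A', B', C', rfl, -, hB', hC', hB'2, hA'⟩ := hy
  have hcop : IsCoprime (2 : ℤ) p :=
    Nat.isCoprime_iff_coprime.mpr ((Nat.coprime_primes Nat.prime_two hp).mpr hp2.symm)
  have hdvd := two_mul_sq_dvd_of_congr hcop (Int.modEq_zero_iff_dvd.mp hB) hA.dvd
    (Int.modEq_zero_iff_dvd.mp hB') (Int.modEq_zero_iff_dvd.mp hB'2)
    (Int.modEq_zero_iff_dvd.mp hC') hA'.dvd
  refine ⟨_, (pairing_traceFreeMat p A B C A' B' C').trans (Int.cast_div hdvd ?_).symm⟩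
  have := hp.ne_zero
  push_cast
  positivity

lemma exists_traceFreeMat_of_pairing_isInt (p : ℕ) (hp : p ≠ 0) (ε : ℤ)
    {x : Matrix (Fin 2) (Fin 2) ℚ} (hx : x.trace = 0)
    (hint : ∀ y ∈ latticeNS p ε, ∃ k : ℤ, pairing p x y = k) :
    ∃ A B C : ℤ, x = traceFreeMat A B C ∧
      B ≡ 0 [ZMOD (p : ℤ)] ∧ A ≡ -(C * ε) [ZMOD (p : ℤ)] := by
  have hpQ : (p : ℚ) ≠ 0 := Nat.cast_ne_zero.mpr hp
  obtain ⟨k₁, hk₁⟩ := hint (traceFreeMat 0 (2 * p) 0)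
    ⟨_, _, _, rfl, .refl _, (dvd_mul_left _ _).modEq_zero_int, .refl _,
      (dvd_mul_right _ _).modEq_zero_int, by simp [Int.ModEq]⟩
  obtain ⟨k₂, hk₂⟩ := hint (traceFreeMat (p ^ 2) 0 0)
    ⟨_, _, _, rfl, (dvd_pow_self _ two_ne_zero).modEq_zero_int, .refl _, .refl _, .refl _,
      by simp [Int.ModEq]⟩
  obtain ⟨k₃, hk₃⟩ := hint (traceFreeMat (ε * p) 0 p)
    ⟨_, _, _, rfl, (dvd_mul_left _ _).modEq_zero_int, .refl _, (dvd_refl _).modEq_zero_int,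
      .refl _, .refl _⟩
  simp only [pairing_traceFreeMat_right p hx] at hk₁ hk₂ hk₃
  push_cast at hk₁ hk₂ hk₃
  field_simp at hk₁ hk₂ hk₃
  have e₀₀ : x 0 0 = p * k₁ := mul_left_cancel₀ (by positivity : (2 * p : ℚ) ≠ 0)
    (by linear_combination hk₁)
  have e₀₁ : x 0 1 = -2 * k₂ := mul_left_cancel₀ (by positivity : (p : ℚ) ^ 2 ≠ 0)
    (by linear_combination -hk₂)
  have e₁₀ : x 1 0 = ε * x 0 1 + 2 * p * k₃ := mul_left_cancel₀ hpQ (by linear_combination hk₃)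
  have e₁₁ : x 1 1 = -x 0 0 := by rw [trace_fin_two] at hx; linear_combination hx
  refine ⟨ε * k₂ - p * k₃, p * k₁, -k₂, ?_, (dvd_mul_right _ _).modEq_zero_int,
    Int.modEq_iff_dvd.mpr ⟨k₃, by ring⟩⟩
  rw [eta_fin_two x, e₁₁, e₁₀, e₀₁, e₀₀, traceFreeMat]
  ext i j
  fin_cases i <;> fin_cases j <;> simp
  ring

theorem stmt_13_general (p : ℕ) (hp : p.Prime) (hp2 : p ≠ 2)
    (ε : ℤ)
    (bform : Matrix (Fin 2) (Fin 2) ℚ → Matrix (Fin 2) (Fin 2) ℚ → ℚ)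
    (hbform : bform = fun x y => -((x * y.adjugate).trace) / (4 * (p : ℚ) ^ 2))
    (Lns : Set (Matrix (Fin 2) (Fin 2) ℚ))
    (hLns : Lns = {x | ∃ A B C : ℤ,
      x = !![(B : ℚ), 2 * (C : ℚ); -2 * (A : ℚ), -(B : ℚ)] ∧
      A ≡ 0 [ZMOD (p : ℤ)] ∧ B ≡ 0 [ZMOD (p : ℤ)] ∧ C ≡ 0 [ZMOD (p : ℤ)] ∧
      B ≡ 0 [ZMOD 2] ∧ A ≡ ε * C [ZMOD ((p : ℤ) ^ 2)]}) :
    {x : Matrix (Fin 2) (Fin 2) ℚ | x.trace = 0 ∧ ∀ y ∈ Lns, ∃ k : ℤ, bform x y = k} =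
      {x | ∃ A B C : ℤ,
        x = !![(B : ℚ), 2 * (C : ℚ); -2 * (A : ℚ), -(B : ℚ)] ∧
        B ≡ 0 [ZMOD (p : ℤ)] ∧ A ≡ -(C * ε) [ZMOD (p : ℤ)]} := by
  obtain rfl : bform = pairing p := hbform
  obtain rfl : Lns = latticeNS p ε := hLns
  ext x
  constructor
  · rintro ⟨hx, hint⟩
    exact exists_traceFreeMat_of_pairing_isInt p hp.ne_zero ε hx hint
  · rintro ⟨A, B, C, rfl, hB, hA⟩
    exact ⟨trace_traceFreeMat A B C, fun y hy => pairing_isInt_of_mem p hp hp2 ε A B C hB hA hy⟩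

/-- Proposition 8.1 (1) of the paper. The dual lattice
`L_ns^∨ = {x ∈ V : β(x,y) ∈ ℤ for all y ∈ L_ns}` equals the set of matrices
`(B, 2C; −2A, −B)` with `A, B, C ∈ ℤ`, `B ≡ 0 (mod p)` and `A ≡ −Cε (mod p)`. -/
theorem stmt_13 (p : ℕ) (hp : p.Prime) (hp2 : p ≠ 2)
    (ε : ℤ) (hε1 : ε ≡ 1 [ZMOD 4]) (hεns : ¬ IsSquare (ε : ZMod p))
    (bform : Matrix (Fin 2) (Fin 2) ℚ → Matrix (Fin 2) (Fin 2) ℚ → ℚ)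
    (hbform : bform = fun x y => -((x * y.adjugate).trace) / (4 * (p : ℚ) ^ 2))
    (Lns : Set (Matrix (Fin 2) (Fin 2) ℚ))
    (hLns : Lns = {x | ∃ A B C : ℤ,
      x = !![(B : ℚ), 2 * (C : ℚ); -2 * (A : ℚ), -(B : ℚ)] ∧
      A ≡ 0 [ZMOD (p : ℤ)] ∧ B ≡ 0 [ZMOD (p : ℤ)] ∧ C ≡ 0 [ZMOD (p : ℤ)] ∧
      B ≡ 0 [ZMOD 2] ∧ A ≡ ε * C [ZMOD ((p : ℤ) ^ 2)]}) :
    {x : Matrix (Fin 2) (Fin 2) ℚ | x.trace = 0 ∧ ∀ y ∈ Lns, ∃ k : ℤ, bform x y = k} =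
      {x | ∃ A B C : ℤ,
        x = !![(B : ℚ), 2 * (C : ℚ); -2 * (A : ℚ), -(B : ℚ)] ∧
        B ≡ 0 [ZMOD (p : ℤ)] ∧ A ≡ -(C * ε) [ZMOD (p : ℤ)]} :=
  stmt_13_general p hp hp2 ε bform hbform Lns hLns
end

section
/- Let M = (α, β; γ, δ) ∈ SL₂(ℤ) satisfy α ≡ δ (mod p) and γ ≡ εβ (mod p), and let x ∈ L_ns^∨. Then M⁻¹·x·M ∈ L_ns^∨ and M⁻¹·x·M − x ∈ L_ns. That is, conjugation by such matrices preserves L_ns^∨ and acts trivially on the quotient L_ns^∨/L_ns. -/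
/-!
A trace-zero matrix `(b, 2c; -2a, -b)` is the matrix of the binary quadratic form
`Q = a X² + b XY + c Y²`, and conjugating it by `M = (α, β; γ, δ) ∈ SL₂(ℤ)` gives the matrix
of `Q ∘ M`, whose coefficients are `a' = Q(α, γ)`, `c' = Q(β, δ)` and the polar value `b'`.
Pairing against the elements of `L_ns` with `(A, B, C)` equal to `(0, 2p, 0)`, `(p², 0, 0)`,
`(0, 0, p²)` and `(εp, 0, p)` shows that `L_ns^∨` consists of the forms with `p ∣ b` and
`p ∣ a + εc`. Modulo `p`, the hypotheses on `M` and `Q` reduce `Q ∘ M` to `Q`, so all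
coefficients of `Q ∘ M - Q` are divisible by `p`. The congruence modulo `p²` comes from the
identity `ε c' - a' - (ε c - a) = (α d + β g)(a + εc) + b (εβ d + α g) + c (ε d² - g²)`,
where `d = δ - α` and `g = εβ - γ` are divisible by `p`.
-/

def formMatrix (a b c : ℤ) : Matrix (Fin 2) (Fin 2) ℚ :=
  !![(b : ℚ), 2 * (c : ℚ); -2 * (a : ℚ), -(b : ℚ)]

def nsLattice (p : ℕ) (ε : ℤ) : Set (Matrix (Fin 2) (Fin 2) ℚ) :=
  {x | ∃ A B C : ℤ, x = formMatrix A B C ∧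
    A ≡ 0 [ZMOD (p : ℤ)] ∧ B ≡ 0 [ZMOD (p : ℤ)] ∧ C ≡ 0 [ZMOD (p : ℤ)] ∧
    B ≡ 0 [ZMOD 2] ∧ A ≡ ε * C [ZMOD ((p : ℤ) ^ 2)]}

def nsPairing (p : ℕ) (x y : Matrix (Fin 2) (Fin 2) ℚ) : ℚ :=
  -((x * y.adjugate).trace) / (4 * (p : ℚ) ^ 2)

def nsDual (p : ℕ) (ε : ℤ) : Set (Matrix (Fin 2) (Fin 2) ℚ) :=
  {x | x.trace = 0 ∧ ∀ y ∈ nsLattice p ε, ∃ k : ℤ, nsPairing p x y = k}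

lemma neg_trace_mul_adjugate_formMatrix {x : Matrix (Fin 2) (Fin 2) ℚ} (hx : x.trace = 0)
    (A B C : ℤ) :
    -(x * (formMatrix A B C).adjugate).trace = 2 * (B * x 0 0 - A * x 0 1 + C * x 1 0) := by
  rw [Matrix.trace_fin_two] at hx
  simp only [formMatrix, Matrix.adjugate_fin_two_of, Matrix.trace_fin_two, Matrix.mul_apply,
    Fin.sum_univ_two, Matrix.of_apply, Matrix.cons_val', Matrix.cons_val_zero,
    Matrix.cons_val_one, Matrix.empty_val', Matrix.cons_val_fin_one]
  linear_combination (-B : ℚ) * hx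

lemma nsPairing_formMatrix {p : ℕ} {x : Matrix (Fin 2) (Fin 2) ℚ} (hx : x.trace = 0)
    (A B C : ℤ) :
    nsPairing p x (formMatrix A B C) =
      (B * x 0 0 - A * x 0 1 + C * x 1 0) / (2 * (p : ℚ) ^ 2) := by
  rw [nsPairing, neg_trace_mul_adjugate_formMatrix hx]
  ring

lemma formMatrix_mem_nsLattice {p : ℕ} {ε A B C : ℤ} (hA : (p : ℤ) ∣ A) (hB : (p : ℤ) ∣ B)
    (hC : (p : ℤ) ∣ C) (hB2 : 2 ∣ B) (hAC : (p : ℤ) ^ 2 ∣ ε * C - A) :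
    formMatrix A B C ∈ nsLattice p ε :=
  ⟨A, B, C, rfl, Int.modEq_zero_iff_dvd.2 hA, Int.modEq_zero_iff_dvd.2 hB,
    Int.modEq_zero_iff_dvd.2 hC, Int.modEq_zero_iff_dvd.2 hB2, Int.modEq_iff_dvd.2 hAC⟩

lemma exists_formMatrix_of_mem_nsDual {p : ℕ} (hp : p ≠ 0) {ε : ℤ}
    {x : Matrix (Fin 2) (Fin 2) ℚ} (hx : x ∈ nsDual p ε) :
    ∃ a b c : ℤ, x = formMatrix a b c ∧ (p : ℤ) ∣ b ∧ (p : ℤ) ∣ a + ε * c := by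
  obtain ⟨htr, hint⟩ := hx
  have hpQ : (p : ℚ) ≠ 0 := Nat.cast_ne_zero.2 hp
  have hpair : ∀ {A B C : ℤ}, formMatrix A B C ∈ nsLattice p ε →
      ∃ k : ℤ, (B * x 0 0 - A * x 0 1 + C * x 1 0 : ℚ) = 2 * p ^ 2 * k := by
    intro A B C hy
    obtain ⟨k, hk⟩ := hint _ hy
    rw [nsPairing_formMatrix htr, div_eq_iff (by positivity)] at hk
    exact ⟨k, by rw [hk]; ring⟩
  obtain ⟨k₁, hk₁⟩ := hpair (A := 0) (B := 2 * p) (C := 0) (formMatrix_mem_nsLattice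
    (dvd_zero _) (dvd_mul_left _ _) (dvd_zero _) (dvd_mul_right _ _) (by simp))
  obtain ⟨k₂, hk₂⟩ := hpair (A := p ^ 2) (B := 0) (C := 0) (formMatrix_mem_nsLattice
    (dvd_pow_self _ two_ne_zero) (dvd_zero _) (dvd_zero _) (dvd_zero _) (by simp))
  obtain ⟨k₃, hk₃⟩ := hpair (A := 0) (B := 0) (C := p ^ 2) (formMatrix_mem_nsLattice
    (dvd_zero _) (dvd_zero _) (dvd_pow_self _ two_ne_zero) (dvd_zero _) (by simp))
  obtain ⟨k₄, hk₄⟩ := hpair (A := ε * p) (B := 0) (C := p) (formMatrix_mem_nsLattice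
    (dvd_mul_left _ _) (dvd_zero _) dvd_rfl (dvd_zero _) (by simp))
  push_cast at hk₁ hk₂ hk₃ hk₄
  have h₀₀ : x 0 0 = p * k₁ :=
    mul_left_cancel₀ (mul_ne_zero two_ne_zero hpQ) (by linear_combination hk₁)
  have h₀₁ : x 0 1 = 2 * (-k₂) :=
    mul_left_cancel₀ (pow_ne_zero 2 hpQ) (by linear_combination -hk₂)
  have h₁₀ : x 1 0 = -2 * (-k₃) :=
    mul_left_cancel₀ (pow_ne_zero 2 hpQ) (by linear_combination hk₃)
  have h₁₁ : x 1 1 = -(p * k₁) := by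
    rw [Matrix.trace_fin_two] at htr; linear_combination htr - h₀₀
  have hk : k₃ + ε * k₂ = p * k₄ := by
    have : ((k₃ + ε * k₂ : ℤ) : ℚ) = (p * k₄ : ℤ) := by
      push_cast
      refine mul_left_cancel₀ (mul_ne_zero two_ne_zero hpQ) ?_
      rw [h₀₁, h₁₀] at hk₄
      linear_combination hk₄
    exact_mod_cast this
  refine ⟨-k₃, p * k₁, -k₂, ?_, dvd_mul_right _ _, ⟨-k₄, by linear_combination -hk⟩⟩
  rw [Matrix.eta_fin_two x, h₀₀, h₀₁, h₁₀, h₁₁, formMatrix]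
  push_cast
  rfl

lemma trace_formMatrix (a b c : ℤ) : (formMatrix a b c).trace = 0 := by
  simp [formMatrix, Matrix.trace_fin_two]

lemma formMatrix_mem_nsDual {p : ℕ} (hp : Odd p) {ε a b c : ℤ} (hb : (p : ℤ) ∣ b)
    (hac : (p : ℤ) ∣ a + ε * c) : formMatrix a b c ∈ nsDual p ε := by
  refine ⟨trace_formMatrix a b c, ?_⟩
  rintro _ ⟨A, B, C, rfl, -, hB, hC, hB2, hAC⟩
  have hcop : IsCoprime (2 : ℤ) p := by
    exact_mod_cast Nat.isCoprime_iff_coprime.2 hp.coprime_two_left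
  obtain ⟨B₁, rfl⟩ : 2 * (p : ℤ) ∣ B :=
    hcop.mul_dvd (Int.modEq_zero_iff_dvd.1 hB2) (Int.modEq_zero_iff_dvd.1 hB)
  obtain ⟨C₁, rfl⟩ := Int.modEq_zero_iff_dvd.1 hC
  obtain ⟨t, ht⟩ := hAC.dvd
  obtain ⟨b₁, rfl⟩ := hb
  obtain ⟨w, hw⟩ := hac
  refine ⟨B₁ * b₁ + t * c - C₁ * w, ?_⟩
  have key : ((2 * p * B₁ * (p * b₁) - 2 * (A * c + p * C₁ * a) : ℤ) : ℚ) =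
      ((2 * p ^ 2 * (B₁ * b₁ + t * c - C₁ * w) : ℤ) : ℚ) := by
    congr 1
    linear_combination (2 * c) * ht - (2 * p * C₁) * hw
  have hpQ : (p : ℚ) ≠ 0 := by exact_mod_cast hp.pos.ne'
  rw [nsPairing_formMatrix (trace_formMatrix _ _ _), div_eq_iff (by positivity)]
  simp only [formMatrix, Matrix.of_apply, Matrix.cons_val', Matrix.cons_val_zero,
    Matrix.cons_val_one, Matrix.empty_val', Matrix.cons_val_fin_one]
  push_cast at key ⊢
  linear_combination key

def quadForm (a b c X Y : ℤ) : ℤ := a * X ^ 2 + b * X * Y + c * Y ^ 2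

def polarForm (a b c X Y X' Y' : ℤ) : ℤ :=
  2 * a * X * X' + b * (X * Y' + X' * Y) + 2 * c * Y * Y'

lemma formMatrix_sub (a b c a' b' c' : ℤ) :
    formMatrix a' b' c' - formMatrix a b c = formMatrix (a' - a) (b' - b) (c' - c) := by
  ext i j
  fin_cases i <;> fin_cases j <;> simp [formMatrix] <;> ring

lemma inv_mul_formMatrix_mul {α β γ δ : ℤ} (hdet : α * δ - β * γ = 1) (a b c : ℤ) :
    (!![(α : ℚ), β; γ, δ])⁻¹ * formMatrix a b c * !![(α : ℚ), β; γ, δ] =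
      formMatrix (quadForm a b c α γ) (polarForm a b c α γ β δ) (quadForm a b c β δ) := by
  have hdetQ : ((α * δ - β * γ : ℤ) : ℚ) = 1 := by exact_mod_cast hdet
  push_cast at hdetQ
  rw [Matrix.inv_def, Matrix.det_fin_two_of, hdetQ, Ring.inverse_one, one_smul,
    Matrix.adjugate_fin_two_of]
  ext i j
  fin_cases i <;> fin_cases j <;>
    simp [formMatrix, quadForm, polarForm] <;> ring

lemma conj_coeffs_modEq {p : ℕ} {ε α β γ δ a b c : ℤ} (hdet : α * δ - β * γ = 1)
    (hαδ : α ≡ δ [ZMOD p]) (hγβ : γ ≡ ε * β [ZMOD p]) (hb : (p : ℤ) ∣ b)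
    (hac : (p : ℤ) ∣ a + ε * c) :
    quadForm a b c α γ ≡ a [ZMOD p] ∧ polarForm a b c α γ β δ ≡ b [ZMOD p] ∧
      quadForm a b c β δ ≡ c [ZMOD p] := by
  rw [← ZMod.intCast_zmod_eq_zero_iff_dvd] at hb hac
  rw [← ZMod.intCast_eq_intCast_iff] at hαδ hγβ
  simp only [← ZMod.intCast_eq_intCast_iff, quadForm, polarForm]
  have hdet' : ((α * δ - β * γ : ℤ) : ZMod p) = 1 := by rw [hdet, Int.cast_one]
  push_cast at hγβ hac hdet' ⊢
  have ha : (a : ZMod p) = -(ε * c) := eq_neg_of_add_eq_zero_left hac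
  rw [← hαδ, hγβ] at hdet' ⊢
  rw [hb, ha]
  refine ⟨?_, ?_, ?_⟩
  · linear_combination (-(ε * c) : ZMod p) * hdet'
  · ring
  · linear_combination (c : ZMod p) * hdet'

lemma two_dvd_polarForm_sub {α β γ δ : ℤ} (hdet : α * δ - β * γ = 1) (a b c : ℤ) :
    2 ∣ polarForm a b c α γ β δ - b :=
  ⟨a * α * β + b * β * γ + c * γ * δ, by unfold polarForm; linear_combination b * hdet⟩

lemma sq_dvd_conj_sub {n ε α β γ δ a b c : ℤ} (hdet : α * δ - β * γ = 1)
    (hαδ : α ≡ δ [ZMOD n]) (hγβ : γ ≡ ε * β [ZMOD n]) (hb : n ∣ b) (hac : n ∣ a + ε * c) :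
    n ^ 2 ∣ ε * (quadForm a b c β δ - c) - (quadForm a b c α γ - a) := by
  have hd : n ∣ δ - α := hαδ.dvd
  have hg : n ∣ ε * β - γ := hγβ.dvd
  have key : ε * (quadForm a b c β δ - c) - (quadForm a b c α γ - a) =
      (α * (δ - α) + β * (ε * β - γ)) * (a + ε * c) + b * (ε * β * (δ - α) + α * (ε * β - γ)) +
        c * (ε * (δ - α) ^ 2 - (ε * β - γ) ^ 2) := by
    unfold quadForm; linear_combination (ε * c - a) * hdet
  rw [key, sq]
  refine dvd_add (dvd_add ?_ ?_) ?_
  · exact mul_dvd_mul (dvd_add (hd.mul_left _) (hg.mul_left _)) hac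
  · exact mul_dvd_mul hb (dvd_add (hd.mul_left _) (hg.mul_left _))
  · rw [← sq]
    exact dvd_mul_of_dvd_right (dvd_sub ((pow_dvd_pow_of_dvd hd 2).mul_left _)
      (pow_dvd_pow_of_dvd hg 2)) _

theorem stmt_14_general (p : ℕ) (hp : p.Prime) (hp2 : p ≠ 2)
    (ε : ℤ)
    (bform : Matrix (Fin 2) (Fin 2) ℚ → Matrix (Fin 2) (Fin 2) ℚ → ℚ)
    (hbform : bform = fun x y => -((x * y.adjugate).trace) / (4 * (p : ℚ) ^ 2))
    (Lns : Set (Matrix (Fin 2) (Fin 2) ℚ))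
    (hLns : Lns = {x | ∃ A B C : ℤ,
      x = !![(B : ℚ), 2 * (C : ℚ); -2 * (A : ℚ), -(B : ℚ)] ∧
      A ≡ 0 [ZMOD (p : ℤ)] ∧ B ≡ 0 [ZMOD (p : ℤ)] ∧ C ≡ 0 [ZMOD (p : ℤ)] ∧
      B ≡ 0 [ZMOD 2] ∧ A ≡ ε * C [ZMOD ((p : ℤ) ^ 2)]})
    (LnsDual : Set (Matrix (Fin 2) (Fin 2) ℚ))
    (hLnsDual : LnsDual =
      {x | x.trace = 0 ∧ ∀ y ∈ Lns, ∃ k : ℤ, bform x y = k})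
    (α β γ δ : ℤ) (hdet : α * δ - β * γ = 1)
    (hαδ : α ≡ δ [ZMOD (p : ℤ)]) (hγβ : γ ≡ ε * β [ZMOD (p : ℤ)])
    (M : Matrix (Fin 2) (Fin 2) ℚ)
    (hM : M = !![(α : ℚ), (β : ℚ); (γ : ℚ), (δ : ℚ)])
    (x : Matrix (Fin 2) (Fin 2) ℚ) (hx : x ∈ LnsDual) :
    M⁻¹ * x * M ∈ LnsDual ∧ M⁻¹ * x * M - x ∈ Lns := by
  subst hbform hLns hLnsDual hM
  change x ∈ nsDual p ε at hx
  change _ ∈ nsDual p ε ∧ _ ∈ nsLattice p ε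
  obtain ⟨a, b, c, rfl, hb, hac⟩ := exists_formMatrix_of_mem_nsDual hp.ne_zero hx
  obtain ⟨ha', hb', hc'⟩ := conj_coeffs_modEq hdet hαδ hγβ hb hac
  rw [inv_mul_formMatrix_mul hdet, formMatrix_sub]
  refine ⟨formMatrix_mem_nsDual (hp.odd_of_ne_two hp2) ?_ ?_, formMatrix_mem_nsLattice
    ha'.symm.dvd hb'.symm.dvd hc'.symm.dvd (two_dvd_polarForm_sub hdet a b c)
    (sq_dvd_conj_sub hdet hαδ hγβ hb hac)⟩
  · exact Int.modEq_zero_iff_dvd.1 (hb'.trans (Int.modEq_zero_iff_dvd.2 hb))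
  · exact Int.modEq_zero_iff_dvd.1 ((ha'.add (hc'.mul_left ε)).trans (Int.modEq_zero_iff_dvd.2 hac))

/-- Proposition 8.1 (2), first part. If `M = (α, β; γ, δ) ∈ SL₂(ℤ)`
satisfies `α ≡ δ` and `γ ≡ εβ (mod p)` (i.e. `M ∈ Γ_ns`), then for every
`x ∈ L_ns^∨` one has `M⁻¹·x·M ∈ L_ns^∨` and `M⁻¹·x·M − x ∈ L_ns`: conjugation
preserves `L_ns^∨` and acts trivially on `L_ns^∨/L_ns`. -/
theorem stmt_14 (p : ℕ) (hp : p.Prime) (hp2 : p ≠ 2)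
    (ε : ℤ) (hε1 : ε ≡ 1 [ZMOD 4]) (hεns : ¬ IsSquare (ε : ZMod p))
    (bform : Matrix (Fin 2) (Fin 2) ℚ → Matrix (Fin 2) (Fin 2) ℚ → ℚ)
    (hbform : bform = fun x y => -((x * y.adjugate).trace) / (4 * (p : ℚ) ^ 2))
    (Lns : Set (Matrix (Fin 2) (Fin 2) ℚ))
    (hLns : Lns = {x | ∃ A B C : ℤ,
      x = !![(B : ℚ), 2 * (C : ℚ); -2 * (A : ℚ), -(B : ℚ)] ∧
      A ≡ 0 [ZMOD (p : ℤ)] ∧ B ≡ 0 [ZMOD (p : ℤ)] ∧ C ≡ 0 [ZMOD (p : ℤ)] ∧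
      B ≡ 0 [ZMOD 2] ∧ A ≡ ε * C [ZMOD ((p : ℤ) ^ 2)]})
    (LnsDual : Set (Matrix (Fin 2) (Fin 2) ℚ))
    (hLnsDual : LnsDual =
      {x | x.trace = 0 ∧ ∀ y ∈ Lns, ∃ k : ℤ, bform x y = k})
    (α β γ δ : ℤ) (hdet : α * δ - β * γ = 1)
    (hαδ : α ≡ δ [ZMOD (p : ℤ)]) (hγβ : γ ≡ ε * β [ZMOD (p : ℤ)])
    (M : Matrix (Fin 2) (Fin 2) ℚ)
    (hM : M = !![(α : ℚ), (β : ℚ); (γ : ℚ), (δ : ℚ)])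
    (x : Matrix (Fin 2) (Fin 2) ℚ) (hx : x ∈ LnsDual) :
    M⁻¹ * x * M ∈ LnsDual ∧ M⁻¹ * x * M - x ∈ Lns :=
  stmt_14_general p hp hp2 ε bform hbform Lns hLns LnsDual hLnsDual α β γ δ hdet hαδ hγβ M hM x hx
end

section
/- The map from L_ns^∨ to ℤ/2ℤ × ℤ/p²ℤ sending the matrix (B, 2C; −2A, −B) (with A, B, C ∈ ℤ, B ≡ 0 (mod p), A ≡ −Cε (mod p)) to (B mod 2, (A − Cε) mod p²) is a surjective group homomorphism whose kernel is exactly L_ns. In particular the quotient group L_ns^∨/L_ns is isomorphic to ℤ/2p²ℤ and has order 2p². -/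
/-!
Everything rests on `p` being prime to `2ε` (`ε` is a non-residue, so a unit mod `p`).
Surjectivity: given the target `b` of `A - Cε`, solve `2εC ≡ -b (mod p)` and put
`A = b + Cε`, `B = p·x` with `x` the target mod 2 (`p` is odd).
Kernel: `p² ∣ A - Cε` together with `A ≡ -Cε (mod p)` gives `p ∣ 2εC`, hence `p ∣ C` and `p ∣ A`.
-/

theorem isCoprime_two_mul_of_not_isSquare {p : ℕ} (hp : p.Prime) (hp2 : p ≠ 2) {ε : ℤ}
    (hε : ¬IsSquare (ε : ZMod p)) : IsCoprime (p : ℤ) (2 * ε) := by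
  have hpZ : Prime (p : ℤ) := Nat.prime_iff_prime_int.mp hp
  refine IsCoprime.mul_right (hpZ.coprime_iff_not_dvd.mpr fun h => hp2 ?_)
    (hpZ.coprime_iff_not_dvd.mpr fun h => hε ?_)
  · exact (Nat.prime_dvd_prime_iff_eq hp Nat.prime_two).mp (by exact_mod_cast h)
  · rw [(ZMod.intCast_zmod_eq_zero_iff_dvd ε p).mpr h]
    exact ⟨0, by simp⟩

theorem exists_add_mul_modEq_neg_mul {p ε : ℤ} (h : IsCoprime p (2 * ε)) (b : ℤ) :
    ∃ C : ℤ, b + C * ε ≡ -(C * ε) [ZMOD p] := by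
  obtain ⟨a, c, hac⟩ := h
  exact ⟨-(b * c), Int.modEq_iff_dvd.mpr ⟨-(b * a), by linear_combination b * hac⟩⟩

theorem dvd_of_modEq_of_modEq_neg {p ε A C : ℤ} (h : IsCoprime p (2 * ε))
    (h₁ : A ≡ C * ε [ZMOD p]) (h₂ : A ≡ -(C * ε) [ZMOD p]) : p ∣ C := by
  refine h.dvd_of_dvd_mul_left ?_
  have h₃ := (h₂.symm.trans h₁).dvd
  rwa [show C * ε - -(C * ε) = 2 * ε * C by ring] at h₃

theorem modEq_lattice_iff {p ε A B C : ℤ} (h : IsCoprime p (2 * ε))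
    (hB : B ≡ 0 [ZMOD p]) (hA : A ≡ -(C * ε) [ZMOD p]) :
    (B ≡ 0 [ZMOD 2] ∧ A ≡ ε * C [ZMOD p ^ 2]) ↔
      (A ≡ 0 [ZMOD p] ∧ B ≡ 0 [ZMOD p] ∧ C ≡ 0 [ZMOD p] ∧ B ≡ 0 [ZMOD 2] ∧
        A ≡ ε * C [ZMOD p ^ 2]) := by
  refine ⟨fun ⟨hB2, hAC⟩ => ?_, fun ⟨_, _, _, hB2, hAC⟩ => ⟨hB2, hAC⟩⟩
  have hAp : A ≡ C * ε [ZMOD p] := mul_comm ε C ▸ hAC.of_dvd (dvd_pow_self p two_ne_zero)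
  have hC : p ∣ C := dvd_of_modEq_of_modEq_neg h hAp hA
  exact ⟨hAp.trans (Int.modEq_zero_iff_dvd.mpr (dvd_mul_of_dvd_left hC ε)), hB,
    Int.modEq_zero_iff_dvd.mpr hC, hB2, hAC⟩

theorem stmt_16_general (p : ℕ) (hp : p.Prime) (hp2 : p ≠ 2)
    (ε : ℤ) (hεns : ¬ IsSquare (ε : ZMod p))
    (f : ℤ × ℤ × ℤ → ZMod 2 × ZMod (p ^ 2))
    (hf : f = fun v => (((v.2.1 : ℤ) : ZMod 2), ((v.1 - v.2.2 * ε : ℤ) : ZMod (p ^ 2))))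
    (dual : Set (ℤ × ℤ × ℤ))
    (hdual : dual = {v | v.2.1 ≡ 0 [ZMOD (p : ℤ)] ∧ v.1 ≡ -(v.2.2 * ε) [ZMOD (p : ℤ)]})
    (lat : Set (ℤ × ℤ × ℤ))
    (hlat : lat = {v | v.1 ≡ 0 [ZMOD (p : ℤ)] ∧ v.2.1 ≡ 0 [ZMOD (p : ℤ)] ∧
      v.2.2 ≡ 0 [ZMOD (p : ℤ)] ∧ v.2.1 ≡ 0 [ZMOD 2] ∧
      v.1 ≡ ε * v.2.2 [ZMOD ((p : ℤ) ^ 2)]}) :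
    (∀ v w : ℤ × ℤ × ℤ, f (v + w) = f v + f w) ∧
    (∀ u : ZMod 2 × ZMod (p ^ 2), ∃ v ∈ dual, f v = u) ∧
    (∀ v ∈ dual, (f v = 0 ↔ v ∈ lat)) ∧
    Nonempty ((ZMod 2 × ZMod (p ^ 2)) ≃+ ZMod (2 * p ^ 2)) ∧
    Nat.card (ZMod 2 × ZMod (p ^ 2)) = 2 * p ^ 2 := by
  have hcop := isCoprime_two_mul_of_not_isSquare hp hp2 hεns
  subst hf hdual hlat
  refine ⟨fun v w => ?_, fun u => ?_, fun ⟨A, B, C⟩ ⟨hB, hA⟩ => ?_, ?_, ?_⟩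
  · simp only [Prod.fst_add, Prod.snd_add, Prod.mk_add_mk]
    ext <;> push_cast <;> ring
  · obtain ⟨x, hx⟩ := ZMod.intCast_surjective u.1
    obtain ⟨b, hb⟩ := ZMod.intCast_surjective u.2
    obtain ⟨C, hC⟩ := exists_add_mul_modEq_neg_mul hcop b
    refine ⟨(b + C * ε, p * x, C), ⟨Int.modEq_zero_iff_dvd.mpr (dvd_mul_right _ _), hC⟩, ?_⟩
    ext
    · simp [(hp.odd_of_ne_two hp2).natCast_zmod_two, hx]
    · simp [hb]
  · rw [Set.mem_ofPred_eq, ← modEq_lattice_iff hcop hB hA, Prod.mk_eq_zero,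
      ZMod.intCast_zmod_eq_zero_iff_dvd, ZMod.intCast_zmod_eq_zero_iff_dvd,
      Int.modEq_zero_iff_dvd, Int.modEq_comm, Int.modEq_iff_dvd, mul_comm]
    push_cast
    rfl
  · exact ⟨(ZMod.chineseRemainder (Nat.Coprime.pow_right 2
      ((Nat.coprime_primes Nat.prime_two hp).mpr hp2.symm))).symm.toAddEquiv⟩
  · simp [Nat.card_prod, Nat.card_zmod]

/-- Proposition 8.1 (3) of the paper. Identifying the matrix
`(B, 2C; −2A, −B)` with the triple `(A, B, C) ∈ ℤ³`, the map
`(A,B,C) ↦ (B mod 2, (A − Cε) mod p²)` is an additive homomorphism which,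
restricted to the triples parametrizing `L_ns^∨` (those with `B ≡ 0 (mod p)` and
`A ≡ −Cε (mod p)`), is surjective onto `ℤ/2 × ℤ/p²` and has kernel exactly the
triples parametrizing `L_ns`. In particular `L_ns^∨/L_ns ≃ ℤ/2p²ℤ`, a group of
order `2p²`. -/
theorem stmt_16 (p : ℕ) (hp : p.Prime) (hp2 : p ≠ 2)
    (ε : ℤ) (hε1 : ε ≡ 1 [ZMOD 4]) (hεns : ¬ IsSquare (ε : ZMod p))
    (f : ℤ × ℤ × ℤ → ZMod 2 × ZMod (p ^ 2))
    (hf : f = fun v => (((v.2.1 : ℤ) : ZMod 2), ((v.1 - v.2.2 * ε : ℤ) : ZMod (p ^ 2))))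
    (dual : Set (ℤ × ℤ × ℤ))
    (hdual : dual = {v | v.2.1 ≡ 0 [ZMOD (p : ℤ)] ∧ v.1 ≡ -(v.2.2 * ε) [ZMOD (p : ℤ)]})
    (lat : Set (ℤ × ℤ × ℤ))
    (hlat : lat = {v | v.1 ≡ 0 [ZMOD (p : ℤ)] ∧ v.2.1 ≡ 0 [ZMOD (p : ℤ)] ∧
      v.2.2 ≡ 0 [ZMOD (p : ℤ)] ∧ v.2.1 ≡ 0 [ZMOD 2] ∧
      v.1 ≡ ε * v.2.2 [ZMOD ((p : ℤ) ^ 2)]}) :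
    (∀ v w : ℤ × ℤ × ℤ, f (v + w) = f v + f w) ∧
    (∀ u : ZMod 2 × ZMod (p ^ 2), ∃ v ∈ dual, f v = u) ∧
    (∀ v ∈ dual, (f v = 0 ↔ v ∈ lat)) ∧
    Nonempty ((ZMod 2 × ZMod (p ^ 2)) ≃+ ZMod (2 * p ^ 2)) ∧
    Nat.card (ZMod 2 × ZMod (p ^ 2)) = 2 * p ^ 2 :=
  stmt_16_general p hp hp2 ε hεns f hf dual hdual lat hlat
end
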